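/- arXiv:1807.06570 — 10 statements merged into one kernel-verified Lean document; each statement's English description precedes it below -/
import Mathlib

section
/- Let o_m be the quotient of a complete discrete valuation ring by the m-th power of its maximal ideal, with residue field of even characteristic. For any unit u ∈ o_m^× and any v ∈ o_m, every element of the maximal ideal π·o_m lies in the image set { u·y + v·y² : y ∈ o_m }. -/
/-!
Solve `u y + v y² = p z` by successive approximation modulo powers of `p`. If
`u y + v y² - p z = pᵏ c` with `k ≥ 1`, the Newton correction `y' = y - u⁻¹ pᵏ c` leaves the error
`-2 v y u⁻¹ pᵏ c + v u⁻² p²ᵏ c²`, which is divisible by `pᵏ⁺¹` because `p ∣ 2` and `2k ≥ k + 1`.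
In `o/(πᵐ)` the element `π` is nilpotent, so the approximation becomes exact after finitely many
steps.
-/

section

variable {R : Type*} [CommRing R]

theorem exists_pow_dvd_mul_add_mul_sq_sub {p : R} (h2 : p ∣ 2) (u : Rˣ) (v z : R) :
    ∀ k, 1 ≤ k → ∃ y : R, p ^ k ∣ u * y + v * y ^ 2 - p * z := by
  obtain ⟨w, hw⟩ := h2
  intro k hk
  induction k, hk using Nat.le_induction with
  | base => exact ⟨0, by simp⟩
  | succ k hk ih =>
    obtain ⟨y, c, hc⟩ := ih
    obtain ⟨j, rfl⟩ := Nat.exists_eq_add_of_le' hk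
    refine ⟨y - ↑u⁻¹ * p ^ (j + 1) * c,
      -(w * v * y * ↑u⁻¹ * c) + v * (↑u⁻¹ : R) ^ 2 * p ^ j * c ^ 2, ?_⟩
    linear_combination hc - p ^ (j + 1) * c * u.mul_inv
      - v * y * ↑u⁻¹ * p ^ (j + 1) * c * hw

theorem exists_mul_add_mul_sq_eq_mul {p : R} (hp : IsNilpotent p) (h2 : p ∣ 2) (u : Rˣ)
    (v z : R) : ∃ y : R, u * y + v * y ^ 2 = p * z := by
  obtain ⟨n, hn⟩ := hp
  obtain ⟨y, hy⟩ := exists_pow_dvd_mul_add_mul_sq_sub h2 u v z (n + 1) (Nat.le_add_left 1 n)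
  rw [pow_succ, hn, zero_mul, zero_dvd_iff, sub_eq_zero] at hy
  exact ⟨y, hy⟩

end

theorem stmt_1_general {O : Type*} [CommRing O]
    (π : O)
    (hres2 : π ∣ 2)
    (m : ℕ)
    (u : (O ⧸ Ideal.span {π ^ m})ˣ) (v : O ⧸ Ideal.span {π ^ m})
    (z : O) :
    ∃ y : O ⧸ Ideal.span {π ^ m},
      (u : O ⧸ Ideal.span {π ^ m}) * y + v * y ^ 2 =
        Ideal.Quotient.mk (Ideal.span {π ^ m}) (π * z) := by
  set q := Ideal.Quotient.mk (Ideal.span {π ^ m})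
  have hnil : IsNilpotent (q π) :=
    ⟨m, by rw [← map_pow, Ideal.Quotient.eq_zero_iff_mem]; exact Ideal.mem_span_singleton_self _⟩
  have h2 : q π ∣ 2 := map_ofNat q 2 ▸ map_dvd q hres2
  rw [map_mul]
  exact exists_mul_add_mul_sq_eq_mul hnil h2 u v (q z)

/-- in `o_m = O/(π^m)` with residue field of even characteristic,
for any unit `u` and any `v`, every element of `π·o_m` is of the form `u·y + v·y²`. -/
theorem stmt_1 {O : Type*} [CommRing O] [IsDomain O] [IsDiscreteValuationRing O]
    (π : O) (hπ : Irreducible π)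
    [IsAdicComplete (Ideal.span {π}) O] [Finite (O ⧸ Ideal.span {π})]
    (hres2 : π ∣ 2)
    (m : ℕ) (hm : 1 ≤ m)
    (u : (O ⧸ Ideal.span {π ^ m})ˣ) (v : O ⧸ Ideal.span {π ^ m})
    (z : O) :
    ∃ y : O ⧸ Ideal.span {π ^ m},
      (u : O ⧸ Ideal.span {π ^ m}) * y + v * y ^ 2 =
        Ideal.Quotient.mk (Ideal.span {π ^ m}) (π * z) :=
  stmt_1_general π hres2 m u v z
end

section
/- Let o_m be the quotient of a complete discrete valuation ring by the m-th power of its maximal ideal, with residue field of even characteristic. For any unit u ∈ o_m^× and any v ∈ o_m, every unit w ∈ o_m^× can be written as w = x² + u·x·y + v·y² for some x, y ∈ o_m. -/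
/-!
Modulo `π` the unit `w` is a square `x²`, since squaring is bijective on a finite field of
characteristic `2`. For this `x`, the quadratic `v y² + u x y + (x² - w)` has the simple root
`y ≡ 0` modulo `π` (its derivative there is the unit `u x`), which Hensel's lemma lifts to a root
in the complete ring `O`; reducing modulo `π ^ m` gives the representation.
-/

open Polynomial

section

variable {R : Type*} [CommRing R] {I : Ideal R}

theorem exists_sq_sub_mem_of_two_mem [I.IsPrime] [Finite (R ⧸ I)] (h2 : (2 : R) ∈ I) (c : R) :
    ∃ x, x ^ 2 - c ∈ I := by
  have : CharP (R ⧸ I) 2 := CharTwo.of_one_ne_zero_of_two_eq_zero one_ne_zero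
    (by rw [← map_ofNat (Ideal.Quotient.mk I) 2]; exact Ideal.Quotient.eq_zero_iff_mem.mpr h2)
  obtain ⟨x', hx'⟩ := isSquare_of_charTwo' (Ideal.Quotient.mk I c)
  obtain ⟨x, rfl⟩ := Ideal.Quotient.mk_surjective x'
  exact ⟨x, Ideal.Quotient.eq_zero_iff_mem.mp (by rw [map_sub, map_pow, hx', sq, sub_self])⟩

/-- Hensel's lemma applied to the monic polynomial `X² + a X + b c`, whose root `r ≡ -a` yields
the root `c / r` of `b Y² + a Y + c`. -/
theorem HenselianRing.exists_quadratic_root [HenselianRing R I] {a : R}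
    (ha : IsUnit (Ideal.Quotient.mk I a)) (b : R) {c : R} (hc : c ∈ I) :
    ∃ y, b * y ^ 2 + a * y + c = 0 := by
  set f : R[X] := X ^ 2 + C a * X + C (b * c)
  have hf_eval : f.eval (-a) = b * c := by simp [f, sq]
  have hf_deriv : f.derivative.eval (-a) = -a := by
    simp only [f, derivative_add, derivative_X_sq, derivative_C_mul_X, derivative_C, eval_add,
      eval_mul, eval_C, eval_X, eval_zero]
    ring
  have hf_monic : f.Monic := by simp only [f]; monicity!
  obtain ⟨r, hr, hra⟩ := HenselianRing.is_henselian f hf_monic (-a)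
    (hf_eval ▸ I.mul_mem_left b hc) (by rw [hf_deriv, map_neg]; exact ha.neg)
  have : IsLocalHom (Ideal.Quotient.mk I) := isLocalHom_of_le_jacobson_bot I HenselianRing.jac
  have hr_unit : IsUnit r := by
    refine IsUnit.of_map (Ideal.Quotient.mk I) r ?_
    rw [Ideal.Quotient.eq.mpr hra, map_neg]
    exact ha.neg
  obtain ⟨r, rfl⟩ := hr_unit
  refine ⟨c * ↑r⁻¹, ?_⟩
  have hr : (r : R) ^ 2 + a * r + b * c = 0 := by simpa [f] using hr
  linear_combination c * ↑r⁻¹ ^ 2 * hr - (c * (r * ↑r⁻¹ + 1) + a * c * ↑r⁻¹) * r.mul_inv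

theorem Ideal.Quotient.isUnit_mk_of_le {S T : Ideal R} (h : S ≤ T) {x : R}
    (hx : IsUnit (Ideal.Quotient.mk S x)) : IsUnit (Ideal.Quotient.mk T x) := by
  rw [← Ideal.Quotient.factor_mk h]
  exact hx.map _

theorem HenselianRing.exists_eq_sq_add_mul_add_mul_sq [HenselianRing R I] [I.IsPrime]
    [Finite (R ⧸ I)] (h2 : (2 : R) ∈ I) {a : R} (ha : IsUnit (Ideal.Quotient.mk I a)) (b : R)
    {c : R} (hc : IsUnit (Ideal.Quotient.mk I c)) : ∃ x y, c = x ^ 2 + a * x * y + b * y ^ 2 := by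
  obtain ⟨x, hx⟩ := exists_sq_sub_mem_of_two_mem h2 c
  have hx_unit : IsUnit (Ideal.Quotient.mk I x) := by
    rw [← isUnit_pow_iff two_ne_zero, ← map_pow, Ideal.Quotient.eq.mpr hx]
    exact hc
  obtain ⟨y, hy⟩ := exists_quadratic_root (by rw [map_mul]; exact ha.mul hx_unit) b hx
  exact ⟨x, y, by linear_combination -hy⟩

end

/-- in `o_m = O/(π^m)` with residue field of even characteristic,
for any unit `u` and any `v`, every unit `w` can be written as `x² + u·x·y + v·y²`. -/
theorem stmt_2 {O : Type*} [CommRing O] [IsDomain O] [IsDiscreteValuationRing O]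
    (π : O) (hπ : Irreducible π)
    [IsAdicComplete (Ideal.span {π}) O] [Finite (O ⧸ Ideal.span {π})]
    (hres2 : π ∣ 2)
    (m : ℕ) (hm : 1 ≤ m)
    (u : (O ⧸ Ideal.span {π ^ m})ˣ) (v : O ⧸ Ideal.span {π ^ m})
    (w : (O ⧸ Ideal.span {π ^ m})ˣ) :
    ∃ x y : O ⧸ Ideal.span {π ^ m},
      (w : O ⧸ Ideal.span {π ^ m}) =
        x ^ 2 + (u : O ⧸ Ideal.span {π ^ m}) * x * y + v * y ^ 2 := by
  have : (Ideal.span {π}).IsPrime := (PrincipalIdealRing.isMaximal_of_irreducible hπ).isPrime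
  have hle : Ideal.span {π ^ m} ≤ Ideal.span {π} :=
    Ideal.span_singleton_le_span_singleton.mpr (dvd_pow_self π (by omega))
  obtain ⟨a, ha⟩ := Ideal.Quotient.mk_surjective (u : O ⧸ Ideal.span {π ^ m})
  obtain ⟨b, rfl⟩ := Ideal.Quotient.mk_surjective v
  obtain ⟨c, hc⟩ := Ideal.Quotient.mk_surjective (w : O ⧸ Ideal.span {π ^ m})
  obtain ⟨x, y, hxy⟩ := HenselianRing.exists_eq_sq_add_mul_add_mul_sq
    (Ideal.mem_span_singleton.mpr hres2)
    (Ideal.Quotient.isUnit_mk_of_le hle (ha ▸ u.isUnit)) b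
    (Ideal.Quotient.isUnit_mk_of_le hle (hc ▸ w.isUnit))
  refine ⟨Ideal.Quotient.mk _ x, Ideal.Quotient.mk _ y, ?_⟩
  rw [← ha, ← hc, hxy]
  simp only [map_add, map_mul, map_pow]
end

section
/- Let F_q be a finite field of characteristic 2 and let ψ : F_q → ℂ^× be a nontrivial additive character. Then there exists a unique ξ ∈ F_q^× such that Ker(ψ) = { ξx² + x : x ∈ F_q }. -/
/-!
Since `ψ` takes the values `±1`, its kernel has index 2. The map `x ↦ ηx² + x` is additive
with kernel `{0, η⁻¹}`, so for `η ≠ 0` its image also has index 2; hence the image equals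
`Ker ψ` as soon as it is contained in it, that is, as soon as `ψ (η x²) = ψ x` for all `x`.
As `ψ` is primitive, `ξ ↦ ψ (ξ ·)` is a bijection onto the characters of `F`, and Frobenius is
bijective, so exactly one `ξ` satisfies `ψ (ξ x²) = ψ x`.
-/

open Function

namespace AddChar

section ElementaryAbelian

variable {G R : Type*}

lemma mul_self_apply_eq_one [AddMonoid G] [Monoid R] (hG : ∀ x : G, x + x = 0) (ψ : AddChar G R) (x : G) :
    ψ x * ψ x = 1 := by
  rw [← map_add_eq_mul, hG, map_zero_eq_one]

lemma ncard_ker_mul_two [AddCommGroup G] [Finite G] [CommRing R] [NoZeroDivisors R]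
    (hG : ∀ x : G, x + x = 0) {ψ : AddChar G R} (hψ : ψ ≠ 1) : {x | ψ x = 1}.ncard * 2 = Nat.card G := by
  obtain ⟨a, ha⟩ := ne_one_iff.1 hψ
  have hsq := mul_self_apply_eq_one hG ψ
  have ha' : ψ a = -1 := (mul_self_eq_one_iff.1 (hsq a)).resolve_left ha
  have hne : (-1 : R) ≠ 1 := ha' ▸ ha
  have hswap : (· + a) ⁻¹' {x | ψ x = 1} = {x | ψ x = 1}ᶜ := by
    ext x
    simp only [Set.mem_preimage, Set.mem_ofPred_eq, Set.mem_compl_iff, map_add_eq_mul, ha']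
    rcases mul_self_eq_one_iff.1 (hsq x) with hx | hx <;> simp [hx, hne]
  rw [← Set.ncard_add_ncard_compl {x | ψ x = 1}, ← hswap,
    Set.ncard_preimage_of_injective_subset_range (add_left_injective a)
      fun y _ => ⟨y - a, sub_add_cancel y a⟩]
  ring

end ElementaryAbelian

section FiniteField

variable {F : Type*} [Field F] [Fintype F] {ψ : AddChar F ℂ}

lemma mulShift_bijective (hψ : ψ ≠ 1) : Bijective ψ.mulShift :=
  (Fintype.bijective_iff_injective_and_card _).2
    ⟨to_mulShift_inj_of_isPrimitive (IsPrimitive.of_ne_one hψ), card_eq.symm⟩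

lemma existsUnique_apply_mul_pow_char_eq (p : ℕ) [Fact p.Prime] [CharP F p] (hψ : ψ ≠ 1) :
    ∃! ξ : F, ∀ x, ψ (ξ * x ^ p) = ψ x := by
  obtain ⟨ξ, hξ⟩ := (mulShift_bijective hψ).2
    (ψ.compAddMonoidHom (frobeniusEquiv F p).symm.toAddEquiv.toAddMonoidHom)
  have hξ' (x : F) : ψ (ξ * x ^ p) = ψ x := by simpa using congr($hξ (x ^ p))
  refine ⟨ξ, hξ', fun η hη => (mulShift_bijective hψ).1 ?_⟩
  ext y
  obtain ⟨x, rfl⟩ := surjective_frobenius F p y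
  simp only [mulShift_apply, frobenius_def, hη, hξ']

end FiniteField

end AddChar

namespace CharTwo

variable {F : Type*} [Field F] [CharP F 2]

def quadAddHom (η : F) : F →+ F where
  toFun x := η * x ^ 2 + x
  map_zero' := by ring
  map_add' a b := by rw [add_sq]; ring

@[simp]
lemma coe_quadAddHom (η : F) : ⇑(quadAddHom η) = fun x => η * x ^ 2 + x := rfl

lemma coe_ker_quadAddHom (η : F) : ((quadAddHom η).ker : Set F) = {0, η⁻¹} := by
  ext x
  simp only [SetLike.mem_coe, AddMonoidHom.mem_ker, coe_quadAddHom, Set.mem_insert_iff,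
    Set.mem_singleton_iff]
  constructor
  · intro h
    have hfac : x * (η * x + 1) = 0 := by rw [← h]; ring
    refine (mul_eq_zero.1 hfac).imp_right fun hx => (inv_eq_of_mul_eq_one_right ?_).symm
    rwa [CharTwo.add_eq_zero] at hx
  · rintro (rfl | rfl)
    · ring
    · rcases eq_or_ne η 0 with rfl | hη
      · simp
      · rw [sq, ← mul_assoc, mul_inv_cancel₀ hη, one_mul, add_self_eq_zero]

lemma ncard_range_quadAddHom_mul_two [Finite F] {η : F} (hη : η ≠ 0) :
    (Set.range (quadAddHom η)).ncard * 2 = Nat.card F := by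
  have hker : Nat.card (quadAddHom η).ker = 2 := by
    rw [← SetLike.coe_sort_coe, coe_ker_quadAddHom, Nat.card_coe_set_eq,
      Set.ncard_pair (inv_ne_zero hη).symm]
  rw [← AddSubgroup.card_mul_index (quadAddHom η).ker, AddSubgroup.index_ker, hker,
    ← AddMonoidHom.coe_range, ← Nat.card_coe_set_eq, SetLike.coe_sort_coe, mul_comm]

lemma ne_zero_and_ker_eq_range_quadAddHom_iff [Finite F] {R : Type*} [CommRing R]
    [NoZeroDivisors R] {ψ : AddChar F R} (hψ : ψ ≠ 1) {η : F} :
    η ≠ 0 ∧ {x | ψ x = 1} = Set.range (quadAddHom η) ↔ ∀ x, ψ (η * x ^ 2) = ψ x := by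
  have hrange_sub_iff : Set.range (quadAddHom η) ⊆ {x | ψ x = 1} ↔
      ∀ x, ψ (η * x ^ 2) = ψ x := by
    simp only [Set.range_subset_iff, coe_quadAddHom, Set.mem_ofPred_eq,
      AddChar.map_add_eq_mul]
    refine forall_congr' fun x => ?_
    rw [← AddChar.mul_self_apply_eq_one add_self_eq_zero ψ x, (ψ.val_isUnit x).mul_left_inj]
  refine ⟨fun h => hrange_sub_iff.1 h.2.superset, fun h => ?_⟩
  have hη : η ≠ 0 := by
    rintro rfl
    exact hψ (by ext x; simp [← h x])
  refine ⟨hη, (Set.eq_of_subset_of_ncard_le (hrange_sub_iff.2 h) ?_).symm⟩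
  have := AddChar.ncard_ker_mul_two add_self_eq_zero hψ
  have := ncard_range_quadAddHom_mul_two hη
  omega

end CharTwo

/-- for a nontrivial additive character `ψ` of a finite field of
characteristic 2, there is a unique `ξ ≠ 0` with `Ker ψ = { ξx² + x }`. -/
theorem stmt_6 {F : Type*} [Field F] [Fintype F] [CharP F 2]
    (ψ : AddChar F ℂ) (hψ : ∃ x : F, ψ x ≠ 1) :
    ∃! ξ : F, ξ ≠ 0 ∧ {x : F | ψ x = 1} = Set.range (fun x : F => ξ * x ^ 2 + x) := by
  have hψ1 : ψ ≠ 1 := AddChar.ne_one_iff.2 hψ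
  exact (existsUnique_congr fun η => CharTwo.ne_zero_and_ker_eq_range_quadAddHom_iff hψ1).2
    (AddChar.existsUnique_apply_mul_pow_char_eq 2 hψ1)
end

section
/- Let F_q have characteristic 2 and let η ∈ F_q^×. Then the image set V_η = { ηx² + x : x ∈ F_q } is an F_2-subspace of F_q of index 2, and V_η = η⁻¹·V_1; in particular V_η ≠ V_{η'} whenever η ≠ η'. -/
lemma aux_sub {F : Type*} [Field F] [Fintype F] [CharP F 2]
    (η : F) (hη : η ≠ 0) :
    ∃ W : AddSubgroup F,
        (W : Set F) = Set.range (fun x : F => η * x ^ 2 + x) ∧ W.index = 2 := by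
  have h2 : (2 : F) = 0 := by
    have := CharP.cast_eq_zero F 2
    simpa using this
  let f : F →+ F := AddMonoidHom.mk' (fun x => η * x ^ 2 + x) (by
    intro a b
    linear_combination (η*a*b) * h2)
  refine ⟨f.range, ?_, ?_⟩
  · rfl
  · have hker : (f.ker : Set F) = {0, η⁻¹} := by
      ext x
      simp only [AddMonoidHom.coe_ker, Set.mem_preimage, Set.mem_insert_iff,
        Set.mem_singleton_iff]
      constructor
      · intro hx
        have hx' : x * (η * x + 1) = 0 := by
          have : f x = 0 := hx
          simp only [f, AddMonoidHom.mk'_apply] at this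
          linear_combination this
        rcases mul_eq_zero.mp hx' with h | h
        · exact Or.inl h
        · right
          field_simp
          linear_combination h - h2
      · rintro (rfl | rfl)
        · show η * 0 ^ 2 + 0 = 0
          ring
        · show η * (η⁻¹) ^ 2 + η⁻¹ = 0
          rw [sq, ← mul_assoc, mul_inv_cancel₀ hη, one_mul, ← two_mul, h2, zero_mul]
    have hcard : Nat.card f.ker = 2 := by
      have : Nat.card f.ker = Set.ncard ({0, η⁻¹} : Set F) := by
        rw [← hker]; rfl
      rw [this, Set.ncard_pair (Ne.symm (inv_ne_zero hη))]
    have h1 : Nat.card f.ker * f.ker.index = Nat.card F :=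
      AddSubgroup.card_mul_index f.ker
    have h2' : f.ker.index = Nat.card f.range := by
      rw [AddSubgroup.index]
      exact Nat.card_congr (QuotientAddGroup.quotientKerEquivRange f).toEquiv
    have h3 : Nat.card f.range * f.range.index = Nat.card F :=
      AddSubgroup.card_mul_index f.range
    have hpos : 0 < Nat.card f.range := Nat.card_pos
    have : Nat.card f.range * f.range.index = Nat.card f.range * 2 := by
      rw [h3, ← h1, hcard, h2']; ring
    exact Nat.eq_of_mul_eq_mul_left hpos this

lemma sq_surj {F : Type*} [Field F] [Fintype F] [CharP F 2] :
    Function.Surjective (fun x : F => x ^ 2) := by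
  have h2 : (2 : F) = 0 := by simpa using CharP.cast_eq_zero F 2
  have hinj : Function.Injective (fun x : F => x ^ 2) := by
    intro a b h
    simp only at h
    have : (a - b) ^ 2 = 0 := by linear_combination h + (b ^ 2 - a * b) * h2
    have := pow_eq_zero_iff (n := 2) (by norm_num) |>.mp this
    exact sub_eq_zero.mp this
  exact Finite.surjective_of_injective hinj

/-- for `η ≠ 0` in a finite field of characteristic 2, the image set
`V_η = { ηx² + x }` is an additive (𝔽₂-linear) subgroup of index 2, `V_η = η⁻¹·V_1`,
and `V_η ≠ V_{η'}` whenever `η ≠ η'`. -/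
theorem stmt_7 {F : Type*} [Field F] [Fintype F] [CharP F 2]
    (η η' : F) (hη : η ≠ 0) (hη' : η' ≠ 0) :
    (∃ W : AddSubgroup F,
        (W : Set F) = Set.range (fun x : F => η * x ^ 2 + x) ∧ W.index = 2) ∧
      Set.range (fun x : F => η * x ^ 2 + x) =
        (fun y : F => η⁻¹ * y) '' Set.range (fun x : F => x ^ 2 + x) ∧
      (η ≠ η' →
        Set.range (fun x : F => η * x ^ 2 + x) ≠
          Set.range (fun x : F => η' * x ^ 2 + x)) := by
  refine ⟨aux_sub η hη, ?_, ?_⟩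
  · ext y
    simp only [Set.mem_range, Set.mem_image]
    constructor
    · rintro ⟨x, rfl⟩
      refine ⟨(η * x) ^ 2 + η * x, ⟨η * x, rfl⟩, ?_⟩
      field_simp
    · rintro ⟨z, ⟨x, rfl⟩, rfl⟩
      refine ⟨η⁻¹ * x, ?_⟩
      field_simp
  · intro hne heq
    obtain ⟨W, hWc, hWi⟩ := aux_sub η hη
    have hd : η - η' ≠ 0 := sub_ne_zero.mpr hne
    have hWtop : W = ⊤ := by
      rw [AddSubgroup.eq_top_iff']
      intro z
      obtain ⟨y, hy⟩ := sq_surj ((η - η')⁻¹ * z)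
      simp only at hy
      have h1 : η * y ^ 2 + y ∈ W := by
        rw [← SetLike.mem_coe, hWc]; exact ⟨y, rfl⟩
      have h2 : η' * y ^ 2 + y ∈ W := by
        rw [← SetLike.mem_coe, hWc, heq]; exact ⟨y, rfl⟩
      have hz : z = (η * y ^ 2 + y) - (η' * y ^ 2 + y) := by
        have : y ^ 2 = (η - η')⁻¹ * z := hy
        rw [this]
        field_simp
        ring
      rw [hz]
      exact sub_mem h1 h2
    rw [hWtop, AddSubgroup.index_top] at hWi
    exact absurd hWi (by norm_num)
end

section
/- Let o_r = o/(π^r) with o of characteristic 2 and residue field F_q, and write each v ∈ o_r uniquely as v = Σ_{i<r} (v)_i π^i with (v)_i ∈ F_q. Fix a nontrivial additive character 𝛙 of F_q and its unique ξ ∈ F_q^× with Ker(𝛙) = {ξx² + x}. Suppose b, c ∈ o_r^× and 1 ≤ 2m+1 ≤ r satisfy ξ·b² ≠ c² mod (π^{2m+1}). Then there exists z ∈ o_r such that (bz)_m + (c²z²)_{2m} ∉ Ker(𝛙). -/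
/-- The finite ring `o_r = F[[t]]/(t^r)` for a (finite) field `F` of characteristic 2,
realizing the complete discrete valuation ring `o = F[[t]]` with uniformizer `t`. -/
abbrev OFq (F : Type*) [Field F] (r : ℕ) : Type _ :=
  PowerSeries F ⧸ Ideal.span {(PowerSeries.X : PowerSeries F) ^ r}

/-- The `i`-th coefficient `(v)_i ∈ F` of the canonical expansion `v = Σ_{i} (v)_i π^i`
of `v ∈ o_r`.  (For `i < r` this does not depend on the chosen representative.) -/
noncomputable def coeffQ (F : Type*) [Field F] (r i : ℕ) (v : OFq F r) : F :=
  PowerSeries.coeff i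
    (Function.surjInv (f := Ideal.Quotient.mk (Ideal.span {(PowerSeries.X : PowerSeries F) ^ r}))
      Ideal.Quotient.mk_surjective v)

/-- The image of the uniformizer `π` in `o_r`. -/
noncomputable def Xbar (F : Type*) [Field F] (r : ℕ) : OFq F r :=
  Ideal.Quotient.mk (Ideal.span {(PowerSeries.X : PowerSeries F) ^ r}) PowerSeries.X

/-!
Suppose every `z` gave a value in `Ker 𝛙`. Lift `b c⁻¹` to a power series `A` and substitute
`z = c⁻¹ u π^k`. For `k < m` this shows that `u (A)_{m-k}` lies in the kernel for every `u`,
so `(A)_i = 0` for `0 < i ≤ m`; for `k = m` it shows that `a u + u²` lies in the kernel for every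
`u`, where `a = (A)_0`. Comparing with `ξ (μu)² + μu`, where `μ² = ξ⁻¹`, gives `a = μ`, i.e.
`ξ a² = 1`. In characteristic 2 then `ξ A² - 1 = ξ (A - a)²` is divisible by `π^{2m+2}`, so
`ξ b² ≡ c² mod π^{2m+1}`.
-/

open PowerSeries

lemma AddChar.eq_zero_of_forall_mul_eq_one {F M : Type*} [Field F] [Monoid M] {ψ : AddChar F M}
    (hψ : ∃ x, ψ x ≠ 1) {k : F} (hk : ∀ u, ψ (k * u) = 1) : k = 0 := by
  obtain ⟨x, hx⟩ := hψ
  by_contra hk0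
  exact hx (by simpa only [mul_div_cancel₀ x hk0] using hk (x / k))

lemma mul_sq_eq_one_of_forall_addChar {F M : Type*} [Field F] [Finite F] [CharP F 2] [Monoid M]
    {ψ : AddChar F M} (hψ : ∃ x, ψ x ≠ 1) {ξ : F} (hξ : ξ ≠ 0)
    (hker : ∀ x, ψ (ξ * x ^ 2 + x) = 1) {a : F} (ha : ∀ u, ψ (a * u + u ^ 2) = 1) :
    ξ * a ^ 2 = 1 := by
  obtain ⟨μ, hμ⟩ := FiniteField.isSquare_of_char_two (ringChar.eq F 2) ξ⁻¹
  have hξμ : ξ * μ ^ 2 = 1 := by rw [sq, ← hμ, mul_inv_cancel₀ hξ]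
  have hsum : a + μ = 0 := AddChar.eq_zero_of_forall_mul_eq_one hψ fun u => by
    have : a * u + u ^ 2 + (ξ * (μ * u) ^ 2 + μ * u) = (a + μ) * u := by
      linear_combination u ^ 2 * hξμ + u ^ 2 * CharTwo.two_eq_zero (R := F)
    rw [← this, AddChar.map_add_eq_mul, ha, hker, one_mul]
  rwa [CharTwo.add_eq_zero.mp hsum]

section PowerSeries

variable {F M : Type*} [Field F] [Monoid M] {ψ : AddChar F M} {A : F⟦X⟧} {m : ℕ}

lemma coeff_mul_C_mul_X_pow (A : F⟦X⟧) (u : F) {k n : ℕ} (hk : k ≤ n) :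
    coeff n (A * (C u * X ^ k)) = coeff (n - k) A * u := by
  rw [← mul_assoc, coeff_mul_X_pow', if_pos hk, coeff_mul_C]

lemma coeff_two_mul_sq_C_mul_X_pow (u : F) (k n : ℕ) :
    coeff (2 * n) ((C u * X ^ k) ^ 2) = if n = k then u ^ 2 else 0 := by
  rw [mul_pow, ← map_pow, ← pow_mul, coeff_C_mul_X_pow]
  exact if_congr (by omega) rfl rfl

lemma coeff_eq_zero_of_forall_addChar (hψ : ∃ x, ψ x ≠ 1)
    (hA : ∀ W : F⟦X⟧, ψ (coeff m (A * W) + coeff (2 * m) (W ^ 2)) = 1)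
    {i : ℕ} (hi : 1 ≤ i) (him : i ≤ m) : coeff i A = 0 :=
  AddChar.eq_zero_of_forall_mul_eq_one hψ fun u => by
    have h := hA (C u * X ^ (m - i))
    rwa [coeff_mul_C_mul_X_pow A u (Nat.sub_le m i), Nat.sub_sub_self him,
      coeff_two_mul_sq_C_mul_X_pow, if_neg (show m ≠ m - i by omega), add_zero] at h

lemma forall_addChar_constantCoeff_mul_add_sq
    (hA : ∀ W : F⟦X⟧, ψ (coeff m (A * W) + coeff (2 * m) (W ^ 2)) = 1) (u : F) :
    ψ (constantCoeff A * u + u ^ 2) = 1 := by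
  have h := hA (C u * X ^ m)
  rwa [coeff_mul_C_mul_X_pow A u le_rfl, Nat.sub_self, coeff_zero_eq_constantCoeff_apply,
    coeff_two_mul_sq_C_mul_X_pow, if_pos rfl] at h

lemma X_pow_dvd_C_mul_sq_sub_one [CharP F 2] {ξ : F}
    (hA : ∀ i, 1 ≤ i → i ≤ m → coeff i A = 0) (hξ : ξ * constantCoeff A ^ 2 = 1) :
    X ^ (2 * m + 1) ∣ C ξ * A ^ 2 - 1 := by
  set a := C (constantCoeff A)
  have hdvd : X ^ (m + 1) ∣ A - a := X_pow_dvd_iff.mpr fun j hj => by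
    rcases j with _ | j
    · simp [a]
    · simp [a, hA (j + 1) (by omega) (by omega)]
  have hξa : C ξ * a ^ 2 = 1 := by rw [← map_pow, ← map_mul, hξ, map_one]
  have h2 : (2 : F⟦X⟧) = 0 := by rw [← map_ofNat C 2, CharTwo.two_eq_zero, map_zero]
  have hsq : C ξ * A ^ 2 - 1 = C ξ * (A - a) ^ 2 := by
    linear_combination -hξa + (C ξ * A * a - 1) * h2
  rw [hsq]
  exact dvd_mul_of_dvd_right
    ((pow_dvd_pow X (show 2 * m + 1 ≤ (m + 1) * 2 by omega)).trans
      (by rw [pow_mul]; exact pow_dvd_pow_of_dvd hdvd 2)) _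

end PowerSeries

lemma coeffQ_mk {F : Type*} [Field F] {r i : ℕ} (hi : i < r) (p : F⟦X⟧) :
    coeffQ F r i (Ideal.Quotient.mk (Ideal.span {(X : F⟦X⟧) ^ r}) p) = coeff i p := by
  have h := Ideal.Quotient.eq.mp (Function.surjInv_eq (f := Ideal.Quotient.mk
    (Ideal.span {(X : F⟦X⟧) ^ r})) Ideal.Quotient.mk_surjective (Ideal.Quotient.mk _ p))
  rw [Ideal.mem_span_singleton] at h
  unfold coeffQ
  exact sub_eq_zero.mp (by simpa only [map_sub] using X_pow_dvd_iff.mp h i hi)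

lemma mk_mem_span_Xbar_pow {F : Type*} [Field F] {r n : ℕ} {p : F⟦X⟧} (h : X ^ n ∣ p) :
    Ideal.Quotient.mk (Ideal.span {(X : F⟦X⟧) ^ r}) p ∈ Ideal.span {Xbar F r ^ n} := by
  obtain ⟨q, rfl⟩ := h
  rw [map_mul, map_pow]
  exact Ideal.mul_mem_right _ _ (Ideal.subset_span rfl)

theorem stmt_8_general {F : Type*} [Field F] [Fintype F] [CharP F 2]
    (ψ : AddChar F ℂ) (hψ : ∃ x : F, ψ x ≠ 1)
    (ξ : F) (hξ : ξ ≠ 0)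
    (hker : {x : F | ψ x = 1} = Set.range (fun x : F => ξ * x ^ 2 + x))
    (r m : ℕ) (h2 : 2 * m + 1 ≤ r)
    (b c : (OFq F r)ˣ)
    (hbc :
      (Ideal.Quotient.mk (Ideal.span {(PowerSeries.X : PowerSeries F) ^ r})
            (PowerSeries.C ξ)) * (b : OFq F r) ^ 2 - (c : OFq F r) ^ 2 ∉
        Ideal.span {Xbar F r ^ (2 * m + 1)}) :
    ∃ z : OFq F r,
      ψ (coeffQ F r m ((b : OFq F r) * z) +
          coeffQ F r (2 * m) ((c : OFq F r) ^ 2 * z ^ 2)) ≠ 1 := by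
  by_contra! hcon
  set proj := Ideal.Quotient.mk (Ideal.span {(X : F⟦X⟧) ^ r})
  obtain ⟨A, hA⟩ := Ideal.Quotient.mk_surjective ((b : OFq F r) * (↑c⁻¹ : OFq F r))
  have hquad : ∀ W : F⟦X⟧, ψ (coeff m (A * W) + coeff (2 * m) (W ^ 2)) = 1 := fun W => by
    have hb : (b : OFq F r) * ((↑c⁻¹ : OFq F r) * proj W) = proj (A * W) := by
      rw [map_mul, hA]; ring
    have hc : (c : OFq F r) ^ 2 * ((↑c⁻¹ : OFq F r) * proj W) ^ 2 = proj (W ^ 2) := by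
      rw [map_pow, ← mul_pow, ← mul_assoc, Units.mul_inv, one_mul]
    simpa only [hb, hc, proj, coeffQ_mk (show m < r by omega),
      coeffQ_mk (show 2 * m < r by omega)]
      using hcon (↑c⁻¹ * proj W)
  have hξA : ξ * constantCoeff A ^ 2 = 1 :=
    mul_sq_eq_one_of_forall_addChar hψ hξ (fun x => hker.ge ⟨x, rfl⟩)
      (forall_addChar_constantCoeff_mul_add_sq hquad)
  have hdvd := X_pow_dvd_C_mul_sq_sub_one
    (fun i hi him => coeff_eq_zero_of_forall_addChar hψ hquad hi him) hξA
  have hb : (b : OFq F r) = proj A * c := by rw [hA, mul_assoc, Units.inv_mul, mul_one]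
  have hfactor : proj (C ξ) * (b : OFq F r) ^ 2 - c ^ 2 = c ^ 2 * proj (C ξ * A ^ 2 - 1) := by
    rw [hb, map_sub, map_mul, map_pow, map_one]
    ring
  exact hbc (hfactor ▸ Ideal.mul_mem_left _ _ (mk_mem_span_Xbar_pow hdvd))

/-- if `ξ·b² ≠ c² mod π^{2m+1}` for units `b, c` of `o_r` (`1 ≤ 2m+1 ≤ r`),
where `ξ` is the unique nonzero element with `Ker 𝛙 = {ξx² + x}`, then there is `z ∈ o_r`
with `(bz)_m + (c²z²)_{2m} ∉ Ker 𝛙`. -/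
theorem stmt_8 {F : Type*} [Field F] [Fintype F] [CharP F 2]
    (ψ : AddChar F ℂ) (hψ : ∃ x : F, ψ x ≠ 1)
    (ξ : F) (hξ : ξ ≠ 0)
    (hker : {x : F | ψ x = 1} = Set.range (fun x : F => ξ * x ^ 2 + x))
    (r m : ℕ) (h1 : 1 ≤ 2 * m + 1) (h2 : 2 * m + 1 ≤ r)
    (b c : (OFq F r)ˣ)
    (hbc :
      (Ideal.Quotient.mk (Ideal.span {(PowerSeries.X : PowerSeries F) ^ r})
            (PowerSeries.C ξ)) * (b : OFq F r) ^ 2 - (c : OFq F r) ^ 2 ∉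
        Ideal.span {Xbar F r ^ (2 * m + 1)}) :
    ∃ z : OFq F r,
      ψ (coeffQ F r m ((b : OFq F r) * z) +
          coeffQ F r (2 * m) ((c : OFq F r) ^ 2 * z ^ 2)) ≠ 1 :=
  stmt_8_general ψ hψ ξ hξ hker r m h2 b c hbc
end

section
/- Let o have characteristic 0, residue field of characteristic 2, ramification index e, and m ≥ 1. Then |{x² : x ∈ o_m^×}| ≥ |o_m^×| / q^{2e+1}, where o_m = o/(π^m), so |{x² : x ∈ o_m^×}| ≍ q^m with implied constants depending only on e and q. -/
open IsDiscreteValuationRing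

private lemma stmt11_fiber_card_le {A B : Type*} [AddGroup A] [AddCommGroup B] [Finite A]
    (f : A →+ B) (b : B) : Nat.card (f ⁻¹' {b} : Set A) ≤ Nat.card f.ker := by
  rcases Set.eq_empty_or_nonempty (f ⁻¹' {b}) with h | ⟨x₀, hx₀⟩
  · simp [h]
  · have hx₀' : f x₀ = b := hx₀
    refine Nat.card_le_card_of_injective (fun x => (⟨x.1 - x₀, ?_⟩ : f.ker)) ?_
    · have hx : f x.1 = b := x.2
      simp [AddMonoidHom.mem_ker, map_sub, hx, hx₀']
    · intro x y h
      have := congrArg Subtype.val h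
      simp only [sub_left_inj] at this
      exact Subtype.ext this

private lemma stmt11_enat {e m : ℕ} {b : ℕ∞} (h : (m : ℕ∞) ≤ (e : ℕ∞) + b) :
    ((m - e : ℕ) : ℕ∞) ≤ b := by
  induction b using ENat.recTopCoe with
  | top => exact le_top
  | coe n =>
    have h' : m ≤ e + n := by exact_mod_cast h
    exact_mod_cast (show m - e ≤ n by omega)

/-- with `O` a complete DVR of characteristic 0, residue field of size `q`
and characteristic 2, and ramification index `e`, the number of squares of units of
`o_m = O/(π^m)` satisfies `|o_m^×| ≤ |{x² : x ∈ o_m^×}|·q^{2e+1}`. -/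
theorem stmt_11 {O : Type*} [CommRing O] [IsDomain O] [IsDiscreteValuationRing O] [CharZero O]
    (π : O) (hπ : Irreducible π)
    [IsAdicComplete (Ideal.span {π}) O] [Finite (O ⧸ Ideal.span {π})]
    (e : ℕ) (he : 1 ≤ e) (w : Oˣ) (hw : (2 : O) = π ^ e * (w : O))
    (m : ℕ) (hm : 1 ≤ m) :
    Nat.card ((O ⧸ Ideal.span {π ^ m})ˣ) ≤
      Nat.card {y : O ⧸ Ideal.span {π ^ m} | ∃ u : (O ⧸ Ideal.span {π ^ m})ˣ,
          y = (u : O ⧸ Ideal.span {π ^ m}) ^ 2} *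
        (Nat.card (O ⧸ Ideal.span {π})) ^ (2 * e + 1) := by

  have hπ0 : π ≠ 0 := hπ.ne_zero
  have hprime : Prime π := hπ.prime
  haveI hPprime : (Ideal.span {π}).IsPrime :=
    (Ideal.span_singleton_prime hπ0).mpr hprime
  have hPbot : Ideal.span {π} ≠ ⊥ := by
    simpa [Ideal.span_singleton_eq_bot] using hπ0
  set q := Nat.card (O ⧸ Ideal.span {π}) with hq
  -- q ≥ 2
  have hq2 : 2 ≤ q := by
    haveI : (Ideal.span {π}).IsMaximal := PrincipalIdealRing.isMaximal_of_irreducible hπ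
    haveI : Nontrivial (O ⧸ Ideal.span {π}) := Ideal.Quotient.nontrivial_iff.mpr (by
      exact this.ne_top)
    exact Finite.one_lt_card_iff_nontrivial.mpr this
  -- cardinality of quotients by powers
  have hcard : ∀ k : ℕ, Nat.card (O ⧸ Ideal.span {π ^ k}) = q ^ k := by
    intro k
    have h1 : Ideal.span ({π ^ k} : Set O) = Ideal.span {π} ^ k :=
      (Ideal.span_singleton_pow π k).symm
    have h2 := cardQuot_pow_of_prime (S := O) (P := Ideal.span {π}) hPbot (i := k)
    rw [h1]
    simpa [Submodule.cardQuot_apply, hq] using h2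
  have hqpos : 0 < q := by omega
  haveI hfinR : Finite (O ⧸ Ideal.span {π ^ m}) := by
    refine Nat.finite_of_card_ne_zero ?_
    rw [hcard m]; positivity
  set R := O ⧸ Ideal.span {π ^ m} with hR
  -- the set of squares of units
  set S : Set R := {y : R | ∃ u : Rˣ, y = (u : R) ^ 2} with hS
  have hSne : S.Nonempty := ⟨1, 1, by simp⟩
  have hS1 : 1 ≤ Nat.card S := by
    haveI : Nonempty S := hSne.to_subtype
    exact Nat.card_pos
  rcases le_or_gt m (2 * e + 1) with hm2 | hm2
  · -- trivial branch : |Rˣ| ≤ |R| = q^m ≤ q^(2e+1)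
    have h1 : Nat.card Rˣ ≤ Nat.card R :=
      Nat.card_le_card_of_injective (Units.val) (fun _ _ h => Units.ext h)
    have h2 : Nat.card R ≤ q ^ (2 * e + 1) := by
      rw [hcard m]
      exact Nat.pow_le_pow_right hqpos hm2
    calc Nat.card Rˣ ≤ q ^ (2 * e + 1) := h1.trans h2
      _ = 1 * q ^ (2 * e + 1) := (one_mul _).symm
      _ ≤ Nat.card S * q ^ (2 * e + 1) := Nat.mul_le_mul_right _ hS1
  · -- main branch : m ≥ 2e + 2
    -- squaring homomorphism on units
    set sq : Rˣ →* Rˣ := powMonoidHom 2 with hsq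
    -- |Rˣ| = |S| * |ker sq|
    have hrangeS : Nat.card sq.range = Nat.card S := by
      refine Nat.card_congr (Equiv.ofBijective (fun t => (⟨((t : Rˣ) : R), ?_⟩ : S)) ⟨?_, ?_⟩)
      · obtain ⟨u, hu⟩ := t.2
        exact ⟨u, by rw [← hu]; simp [hsq, powMonoidHom_apply]⟩
      · intro t₁ t₂ h
        have : ((t₁ : Rˣ) : R) = ((t₂ : Rˣ) : R) := congrArg Subtype.val h
        exact Subtype.ext (Units.ext this)
      · rintro ⟨y, u, hy⟩
        refine ⟨⟨u ^ 2, ⟨u, rfl⟩⟩, ?_⟩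
        exact Subtype.ext (by simp [hy])
    have hcount : Nat.card Rˣ = Nat.card S * Nat.card sq.ker := by
      rw [Subgroup.card_eq_card_quotient_mul_card_subgroup sq.ker]
      congr 1
      rw [← hrangeS]
      exact Nat.card_congr (QuotientGroup.quotientKerEquivRange sq).toEquiv
    -- kernel of sq injects into A = {x : R | x ^ 2 = 1}
    set A : Set R := {x : R | x ^ 2 = 1} with hA
    have hker_le : Nat.card sq.ker ≤ Nat.card A := by
      refine Nat.card_le_card_of_injective (fun t => (⟨((t : Rˣ) : R), ?_⟩ : A)) ?_
      · have ht : (t : Rˣ) ^ 2 = 1 := by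
          have h := t.2
          rw [MonoidHom.mem_ker] at h
          exact h
        show ((t : Rˣ) : R) ^ 2 = 1
        rw [← Units.val_pow_eq_pow_val, ht, Units.val_one]
      · intro t₁ t₂ h
        have : ((t₁ : Rˣ) : R) = ((t₂ : Rˣ) : R) := congrArg Subtype.val h
        exact Subtype.ext (Units.ext this)
    -- reduction map to O / π^(m-e)
    have hle : Ideal.span ({π ^ m} : Set O) ≤ Ideal.span {π ^ (m - e)} :=
      Ideal.span_singleton_le_span_singleton.mpr (pow_dvd_pow π (by omega))
    set ρ : R →+* O ⧸ Ideal.span {π ^ (m - e)} :=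
      Ideal.Quotient.factor hle with hρ
    -- the valuation facts
    have hv2 : addVal O 2 = (e : ℕ∞) := by
      rw [hw, (addVal O).map_mul, hπ.addVal_pow]
      have hvw : addVal O (w : O) = 0 := by
        simpa using addVal_def' w hπ 0
      rw [hvw, add_zero]
    have hvneg : ∀ z : O, addVal O (-z) = addVal O z := by
      intro z
      have hv1 : addVal O (-1 : O) = 0 := by
        simpa using addVal_def' (-1 : Oˣ) hπ 0
      rw [show -z = (-1) * z by ring, (addVal O).map_mul, hv1, zero_add]
    -- the key claim
    have hkey : ∀ x : R, x ∈ A → ρ x = 1 ∨ ρ x = -1 := by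
      intro x hx
      obtain ⟨a, rfl⟩ := Ideal.Quotient.mk_surjective x
      have hdvd : π ^ m ∣ (a - 1) * (a + 1) := by
        have h0 : (Ideal.Quotient.mk (Ideal.span {π ^ m}) (a ^ 2 - 1)) = 0 := by
          have hx' : (Ideal.Quotient.mk (Ideal.span {π ^ m}) a) ^ 2 = 1 := hx
          rw [map_sub, map_pow, hx', map_one, sub_self]
        have := Ideal.Quotient.eq_zero_iff_mem.mp h0
        rw [Ideal.mem_span_singleton] at this
        convert this using 1; ring
      have hsum : (m : ℕ∞) ≤ addVal O (a - 1) + addVal O (a + 1) := by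
        have h1 : addVal O (π ^ m) ≤ addVal O ((a - 1) * (a + 1)) :=
          addVal_le_iff_dvd.mpr hdvd
        rwa [hπ.addVal_pow, (addVal O).map_mul] at h1
      have hmin : min (addVal O (a - 1)) (addVal O (a + 1)) ≤ (e : ℕ∞) := by
        have h2 : (2 : O) = (a + 1) + (-(a - 1)) := by ring
        calc min (addVal O (a - 1)) (addVal O (a + 1))
            = min (addVal O (a + 1)) (addVal O (-(a - 1))) := by
              rw [hvneg]; exact min_comm _ _
          _ ≤ addVal O ((a + 1) + (-(a - 1))) := (addVal O).map_add _ _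
          _ = (e : ℕ∞) := by rw [← h2, hv2]
      rcases le_or_gt (addVal O (a - 1)) (e : ℕ∞) with hc | hc
      · -- then π^(m-e) ∣ a + 1, so ρ x = -1
        right
        have hb : ((m - e : ℕ) : ℕ∞) ≤ addVal O (a + 1) :=
          stmt11_enat (hsum.trans (add_le_add_left hc _))
        have hdvd' : π ^ (m - e) ∣ a + 1 := by
          rw [← addVal_le_iff_dvd, hπ.addVal_pow]; exact hb
        have h0 : (Ideal.Quotient.mk (Ideal.span {π ^ (m - e)}) (a + 1)) = 0 :=
          Ideal.Quotient.eq_zero_iff_mem.mpr (Ideal.mem_span_singleton.mpr hdvd')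
        have : ρ (Ideal.Quotient.mk (Ideal.span {π ^ m}) a)
            = Ideal.Quotient.mk (Ideal.span {π ^ (m - e)}) a := by
          exact Ideal.Quotient.factor_mk hle a
        rw [this]
        rw [map_add, map_one] at h0
        linear_combination h0
      · -- then π^(m-e) ∣ a - 1, so ρ x = 1
        left
        have hce : addVal O (a + 1) ≤ (e : ℕ∞) := by
          rcases min_le_iff.mp hmin with h | h
          · exact absurd h (not_le.mpr hc)
          · exact h
        have hb : ((m - e : ℕ) : ℕ∞) ≤ addVal O (a - 1) := by
          refine stmt11_enat ?_
          calc (m : ℕ∞) ≤ addVal O (a - 1) + addVal O (a + 1) := hsum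
            _ ≤ addVal O (a - 1) + (e : ℕ∞) := add_le_add_right hce _
            _ = (e : ℕ∞) + addVal O (a - 1) := add_comm _ _
        have hdvd' : π ^ (m - e) ∣ a - 1 := by
          rw [← addVal_le_iff_dvd, hπ.addVal_pow]; exact hb
        have h0 : (Ideal.Quotient.mk (Ideal.span {π ^ (m - e)}) (a - 1)) = 0 :=
          Ideal.Quotient.eq_zero_iff_mem.mpr (Ideal.mem_span_singleton.mpr hdvd')
        have : ρ (Ideal.Quotient.mk (Ideal.span {π ^ m}) a)
            = Ideal.Quotient.mk (Ideal.span {π ^ (m - e)}) a := by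
          exact Ideal.Quotient.factor_mk hle a
        rw [this]
        rw [map_sub, map_one] at h0
        linear_combination h0
    -- kernel of ρ has cardinality q^e
    have hsurj : Function.Surjective ρ := by
      intro y
      obtain ⟨b, rfl⟩ := Ideal.Quotient.mk_surjective y
      exact ⟨Ideal.Quotient.mk _ b, Ideal.Quotient.factor_mk hle b⟩
    have hρker : Nat.card ρ.toAddMonoidHom.ker = q ^ e := by
      have h1 := AddSubgroup.card_eq_card_quotient_mul_card_addSubgroup
        (ρ.toAddMonoidHom.ker)
      have h2 : Nat.card (R ⧸ ρ.toAddMonoidHom.ker) = q ^ (m - e) := by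
        refine (Nat.card_congr
          (QuotientAddGroup.quotientKerEquivOfSurjective ρ.toAddMonoidHom hsurj).toEquiv).trans
          (hcard (m - e))
      rw [hcard m, h2] at h1
      have h3 : q ^ (m - e) * Nat.card ρ.toAddMonoidHom.ker = q ^ (m - e) * q ^ e := by
        rw [← h1, ← pow_add]
        congr 1
        omega
      exact Nat.eq_of_mul_eq_mul_left (by positivity) h3
    -- counting A
    have hcardA : Nat.card A ≤ 2 * q ^ e := by
      have hsub : A ⊆ ρ ⁻¹' {1, -1} := by
        intro x hx
        rcases hkey x hx with h | h <;> simp [h]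
      have hsplit : (ρ ⁻¹' {1, -1} : Set R) = ρ ⁻¹' {1} ∪ ρ ⁻¹' {-1} := by
        rw [← Set.preimage_union]
        congr 1
      calc Nat.card A ≤ Nat.card (ρ ⁻¹' {1, -1} : Set R) := by
            rw [Nat.card_coe_set_eq, Nat.card_coe_set_eq]
            exact Set.ncard_le_ncard hsub (Set.toFinite _)
        _ = Nat.card (ρ ⁻¹' {1} ∪ ρ ⁻¹' {-1} : Set R) := by rw [hsplit]
        _ ≤ Nat.card (ρ ⁻¹' {1} : Set R) + Nat.card (ρ ⁻¹' {-1} : Set R) := by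
            rw [Nat.card_coe_set_eq, Nat.card_coe_set_eq, Nat.card_coe_set_eq]
            exact Set.ncard_union_le _ _
        _ ≤ Nat.card ρ.toAddMonoidHom.ker + Nat.card ρ.toAddMonoidHom.ker :=
            add_le_add (stmt11_fiber_card_le ρ.toAddMonoidHom 1)
              (stmt11_fiber_card_le ρ.toAddMonoidHom (-1))
        _ = 2 * q ^ e := by rw [hρker]; ring
    -- final assembly
    have hfinal : 2 * q ^ e ≤ q ^ (2 * e + 1) := by
      calc 2 * q ^ e ≤ q * q ^ e := Nat.mul_le_mul_right _ hq2
        _ = q ^ (e + 1) := by ring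
        _ ≤ q ^ (2 * e + 1) := Nat.pow_le_pow_right hqpos (by omega)
    calc Nat.card Rˣ = Nat.card S * Nat.card sq.ker := hcount
      _ ≤ Nat.card S * (2 * q ^ e) :=
          Nat.mul_le_mul_left _ (hker_le.trans hcardA)
      _ ≤ Nat.card S * q ^ (2 * e + 1) := Nat.mul_le_mul_left _ hfinal
end

section
/- Let G be a group, H ◁ G a normal subgroup and K ≤ G a subgroup with G = HK. Let χ₁ : H → ℂ^× and χ₂ : K → ℂ^× be homomorphisms such that χ₁(k h k⁻¹) = χ₁(h) for all h ∈ H, k ∈ K, and χ₁ and χ₂ agree on H ∩ K. Then there exists a unique homomorphism χ : G → ℂ^× restricting to χ₁ on H and to χ₂ on K. -/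
/-- Diamond Lemma: if `G = HK` with `H ◁ G`, `χ₁ : H → ℂˣ` is `K`-conjugation
invariant and agrees with `χ₂ : K → ℂˣ` on `H ∩ K`, then there is a unique character of `G`
extending both. -/
theorem stmt_12 {G : Type*} [Group G] (H K : Subgroup G) (hH : H.Normal)
    (hHK : ∀ g : G, ∃ h ∈ H, ∃ k ∈ K, g = h * k)
    (χ₁ : H →* ℂˣ) (χ₂ : K →* ℂˣ)
    (hinv : ∀ (h : G) (hh : h ∈ H) (k : K),
      χ₁ ⟨(k : G) * h * (k : G)⁻¹, hH.conj_mem h hh (k : G)⟩ = χ₁ ⟨h, hh⟩)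
    (hagree : ∀ (x : G) (hxH : x ∈ H) (hxK : x ∈ K), χ₁ ⟨x, hxH⟩ = χ₂ ⟨x, hxK⟩) :
    ∃! χ : G →* ℂˣ, (∀ h : H, χ (h : G) = χ₁ h) ∧ (∀ k : K, χ (k : G) = χ₂ k) := by
  classical
  -- well-definedness
  have key : ∀ (a a' : G) (ha : a ∈ H) (ha' : a' ∈ H) (b b' : G) (hb : b ∈ K) (hb' : b' ∈ K),
      a * b = a' * b' → χ₁ ⟨a, ha⟩ * χ₂ ⟨b, hb⟩ = χ₁ ⟨a', ha'⟩ * χ₂ ⟨b', hb'⟩ := by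
    intro a a' ha ha' b b' hb hb' heq
    have hx : a'⁻¹ * a = b' * b⁻¹ := by
      rw [eq_comm, mul_inv_eq_iff_eq_mul, mul_assoc, heq, inv_mul_cancel_left]
    have hxH : a'⁻¹ * a ∈ H := H.mul_mem (H.inv_mem ha') ha
    have hxK : a'⁻¹ * a ∈ K := hx ▸ K.mul_mem hb' (K.inv_mem hb)
    have e1 : χ₁ ⟨a, ha⟩ = χ₁ ⟨a', ha'⟩ * χ₁ ⟨a'⁻¹ * a, hxH⟩ := by
      rw [← map_mul]; congr 1; ext; simp [mul_assoc]
    have e2 : χ₂ ⟨b', hb'⟩ = χ₂ ⟨a'⁻¹ * a, hxK⟩ * χ₂ ⟨b, hb⟩ := by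
      rw [← map_mul]; congr 1; ext; simp [hx, mul_assoc]
    rw [e1, hagree _ hxH hxK, e2, mul_assoc]
  choose hh hhH kk kkK hdec using hHK
  set f : G → ℂˣ := fun g => χ₁ ⟨hh g, hhH g⟩ * χ₂ ⟨kk g, kkK g⟩ with hf
  have fval : ∀ (a b : G) (ha : a ∈ H) (hb : b ∈ K),
      f (a * b) = χ₁ ⟨a, ha⟩ * χ₂ ⟨b, hb⟩ := by
    intro a b ha hb
    exact key _ _ _ _ _ _ _ _ (hdec (a * b)).symm
  have fmul : ∀ x y : G, f (x * y) = f x * f y := by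
    intro x y
    have hconj : kk x * hh y * (kk x)⁻¹ ∈ H := hH.conj_mem _ (hhH y) (kk x)
    have haH : hh x * (kk x * hh y * (kk x)⁻¹) ∈ H := H.mul_mem (hhH x) hconj
    have hbK : kk x * kk y ∈ K := K.mul_mem (kkK x) (kkK y)
    have hxy : x * y = (hh x * (kk x * hh y * (kk x)⁻¹)) * (kk x * kk y) := by
      conv_lhs => rw [hdec x, hdec y]
      group
    rw [hxy, fval _ _ haH hbK]
    have e1 : χ₁ ⟨hh x * (kk x * hh y * (kk x)⁻¹), haH⟩
        = χ₁ ⟨hh x, hhH x⟩ * χ₁ ⟨kk x * hh y * (kk x)⁻¹, hconj⟩ := by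
      rw [← map_mul]; rfl
    rw [e1, hinv (hh y) (hhH y) ⟨kk x, kkK x⟩]
    have e2 : χ₂ ⟨kk x * kk y, hbK⟩ = χ₂ ⟨kk x, kkK x⟩ * χ₂ ⟨kk y, kkK y⟩ := by
      rw [← map_mul]; rfl
    rw [e2]
    exact mul_mul_mul_comm _ _ _ _
  have fone : f 1 = 1 := by
    have h1 := fval 1 1 H.one_mem K.one_mem
    rw [mul_one] at h1
    rw [h1, show (⟨1, H.one_mem⟩ : H) = 1 from rfl, show (⟨1, K.one_mem⟩ : K) = 1 from rfl,
      map_one, map_one, mul_one]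
  set χ : G →* ℂˣ := { toFun := f, map_one' := fone, map_mul' := fmul } with hχ
  have hχH : ∀ h : H, χ (h : G) = χ₁ h := by
    intro h
    have h1 := fval h 1 h.2 K.one_mem
    rw [mul_one] at h1
    show f (h : G) = χ₁ h
    rw [h1, show (⟨1, K.one_mem⟩ : K) = 1 from rfl, map_one, mul_one]
  have hχK : ∀ k : K, χ (k : G) = χ₂ k := by
    intro k
    have h1 := fval 1 k H.one_mem k.2
    rw [one_mul] at h1
    show f (k : G) = χ₂ k
    rw [h1, show (⟨1, H.one_mem⟩ : H) = 1 from rfl, map_one, one_mul]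
  refine ⟨χ, ⟨hχH, hχK⟩, ?_⟩
  rintro χ' ⟨c1, c2⟩
  ext g
  have : g = hh g * kk g := hdec g
  rw [this, map_mul, map_mul]
  rw [c1 ⟨hh g, hhH g⟩, c2 ⟨kk g, kkK g⟩, hχH ⟨hh g, hhH g⟩, hχK ⟨kk g, kkK g⟩]
end

section
/- Let o have residue field of characteristic 2, r ≥ 2, ℓ = ⌈r/2⌉, ℓ' = ⌊r/2⌋, and fix a character ψ of o_r with ψ(π^{r−1}) ≠ 1. For matrices B₁ = [[0, a₁⁻¹α₁],[a₁, β₁]] and B₂ = [[0, a₂⁻¹α₂],[a₂, β₂]] in M_2(o_{ℓ'}), there exists g ∈ SL_2(o_{ℓ'}) and s ∈ o_{ℓ'} with g B₁ g⁻¹ = B₂ + sI if and only if there exists s ∈ o_{ℓ'} with β₂ = β₁ − 2s, α₂ = α₁ − s² + sβ₁, and a₂a₁⁻¹ ∈ det(C_{GL_2(o_{ℓ'})}(B₁)). -/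
/-! The trace and determinant of `B₂ + s` are `β₂ + 2s` and `s² + sβ₂ - α₂`, so `SL₂`-conjugacy of
`B₁` and `B₂ + s` forces the two relations on `α, β`. Conversely these relations give an explicit
`k ∈ GL₂` with `k B₁ = (B₂ + s) k` and `det k = a₂ a₁⁻¹`. Once one such `k` exists, `g ∈ SL₂`
conjugates `B₁` to `B₂ + s` exactly when `g⁻¹ k` centralizes `B₁`, so the obstruction is whether
`det k` is the determinant of an invertible element of the centralizer of `B₁`. -/

theorem Units.conj_eq_iff_commute {M : Type*} [Monoid M] {B C : M} {k : Mˣ}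
    (hk : SemiconjBy (↑k) B C) (g : Mˣ) :
    ↑g * B * ↑g⁻¹ = C ↔ Commute (↑(g⁻¹ * k) : M) B := by
  rw [← Units.mul_left_inj k, ← hk.eq, ← Units.mul_right_inj g⁻¹]
  simp only [Commute, SemiconjBy, Units.val_mul, ← mul_assoc, Units.inv_mul, one_mul]
  exact eq_comm

namespace Matrix.SpecialLinearGroup

variable {n R : Type*} [Fintype n] [DecidableEq n] [CommRing R]

theorem exists_conj_eq_iff_det_mem_centralizer {B C k : Matrix n n R}
    (hk : IsUnit k.det) (hkB : SemiconjBy k B C) :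
    (∃ g : SpecialLinearGroup n R,
      (g : Matrix n n R) * B * ((g⁻¹ : SpecialLinearGroup n R) : Matrix n n R) = C) ↔
      ∃ M : Matrix n n R, M * B = B * M ∧ IsUnit M.det ∧ M.det = k.det := by
  obtain ⟨K, rfl⟩ := (isUnit_iff_isUnit_det k).mpr hk
  constructor
  · rintro ⟨g, hg⟩
    refine ⟨↑((toGL g)⁻¹ * K), ((Units.conj_eq_iff_commute hkB (toGL g)).mp hg).eq, ?_, ?_⟩ <;>
      simp
  · rintro ⟨M, hMB, hMu, hMdet⟩
    obtain ⟨U, rfl⟩ := (isUnit_iff_isUnit_det M).mpr hMu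
    have hdet : (↑(K * U⁻¹) : Matrix n n R).det = 1 := by
      rw [Units.val_mul, det_mul, ← hMdet, ← det_mul, ← Units.val_mul, mul_inv_cancel,
        Units.val_one, det_one]
    let g : SpecialLinearGroup n R := ⟨_, hdet⟩
    have hg : toGL g = K * U⁻¹ := Units.ext rfl
    refine ⟨g, (Units.conj_eq_iff_commute hkB (toGL g)).mpr ?_⟩
    rw [hg, show (K * U⁻¹)⁻¹ * K = U by group]
    exact hMB

end Matrix.SpecialLinearGroup

section ScaledCompanion

variable {R : Type*} [CommRing R]

/- Conjugating by `diag(1, a)` turns `scaledCompanion a α β` into the companion matrix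
`!![0, α; 1, β]` of `X² - βX - α`. -/
def scaledCompanion (a : Rˣ) (α β : R) : Matrix (Fin 2) (Fin 2) R :=
  !![0, ↑a⁻¹ * α; ↑a, β]

theorem scaledCompanion_relations_of_conj {a₁ a₂ : Rˣ} {α₁ β₁ α₂ β₂ s : R}
    (g : GL (Fin 2) R)
    (h : g.val * scaledCompanion a₁ α₁ β₁ * g⁻¹.val = scaledCompanion a₂ α₂ β₂ + s • 1) :
    β₂ = β₁ - 2 * s ∧ α₂ = α₁ - s ^ 2 + s * β₁ := by
  have h₁ : (↑a₁⁻¹ * ↑a₁ : R) = 1 := a₁.inv_mul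
  have h₂ : (↑a₂⁻¹ * ↑a₂ : R) = 1 := a₂.inv_mul
  have htr := Matrix.trace_units_conj g (scaledCompanion a₁ α₁ β₁)
  have hdet := Matrix.det_units_conj g (scaledCompanion a₁ α₁ β₁)
  rw [h] at htr hdet
  simp [scaledCompanion, Matrix.trace_fin_two, Matrix.det_fin_two] at htr hdet
  have hβ : β₂ = β₁ - 2 * s := by linear_combination htr
  exact ⟨hβ, by linear_combination -hdet + α₁ * h₁ - α₂ * h₂ + s * hβ⟩

/- `diag(1, a₂) * !![1, s; 0, 1] * diag(1, a₁)⁻¹`: the middle factor carries `!![0, α₁; 1, β₁]`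
to `!![s, α₂; 1, β₂ + s]` exactly under the relations below. -/
def scaledCompanionIntertwiner (a₁ a₂ : Rˣ) (s : R) : Matrix (Fin 2) (Fin 2) R :=
  !![1, ↑a₁⁻¹ * s; 0, ↑a₁⁻¹ * ↑a₂]

theorem det_scaledCompanionIntertwiner (a₁ a₂ : Rˣ) (s : R) :
    (scaledCompanionIntertwiner a₁ a₂ s).det = ↑a₂ * ↑a₁⁻¹ := by
  simp [scaledCompanionIntertwiner, Matrix.det_fin_two_of, mul_comm]

theorem scaledCompanionIntertwiner_semiconj {a₁ a₂ : Rˣ} {α₁ β₁ α₂ β₂ s : R}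
    (hβ : β₂ = β₁ - 2 * s) (hα : α₂ = α₁ - s ^ 2 + s * β₁) :
    SemiconjBy (scaledCompanionIntertwiner a₁ a₂ s) (scaledCompanion a₁ α₁ β₁)
      (scaledCompanion a₂ α₂ β₂ + s • 1) := by
  have h₁ : (↑a₁⁻¹ * ↑a₁ : R) = 1 := a₁.inv_mul
  have h₂ : (↑a₂⁻¹ * ↑a₂ : R) = 1 := a₂.inv_mul
  unfold SemiconjBy scaledCompanionIntertwiner scaledCompanion
  ext i j
  fin_cases i <;> fin_cases j <;>
    simp [Matrix.mul_apply, Fin.sum_univ_two, Matrix.one_apply]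
  · linear_combination s * h₁
  · linear_combination (-(↑a₁⁻¹ : R) * α₂) * h₂ - (↑a₁⁻¹ : R) * hα
  · linear_combination (↑a₂ : R) * h₁
  · linear_combination (-(↑a₁⁻¹ : R) * ↑a₂) * hβ

theorem exists_conj_scaledCompanion_iff {a₁ a₂ : Rˣ} {α₁ β₁ α₂ β₂ s : R}
    (hβ : β₂ = β₁ - 2 * s) (hα : α₂ = α₁ - s ^ 2 + s * β₁) :
    (∃ g : Matrix.SpecialLinearGroup (Fin 2) R,
      (g : Matrix (Fin 2) (Fin 2) R) * scaledCompanion a₁ α₁ β₁ *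
        ((g⁻¹ : Matrix.SpecialLinearGroup (Fin 2) R) : Matrix (Fin 2) (Fin 2) R) =
          scaledCompanion a₂ α₂ β₂ + s • 1) ↔
      ∃ M : Matrix (Fin 2) (Fin 2) R,
        M * scaledCompanion a₁ α₁ β₁ = scaledCompanion a₁ α₁ β₁ * M ∧
          IsUnit M.det ∧ M.det = ↑a₂ * ↑a₁⁻¹ := by
  have hdet := det_scaledCompanionIntertwiner a₁ a₂ s
  rw [Matrix.SpecialLinearGroup.exists_conj_eq_iff_det_mem_centralizer
    (hdet ▸ (a₂ * a₁⁻¹).isUnit) (scaledCompanionIntertwiner_semiconj hβ hα), hdet]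

end ScaledCompanion

theorem stmt_15_general {O : Type*} [CommRing O] (π : O) (ℓ' : ℕ)
    (a₁ a₂ : (O ⧸ Ideal.span {π ^ ℓ'})ˣ) (α₁ β₁ α₂ β₂ : O ⧸ Ideal.span {π ^ ℓ'}) :
    (∃ (g : Matrix.SpecialLinearGroup (Fin 2) (O ⧸ Ideal.span {π ^ ℓ'}))
        (s : O ⧸ Ideal.span {π ^ ℓ'}),
        (g : Matrix (Fin 2) (Fin 2) (O ⧸ Ideal.span {π ^ ℓ'})) *
            !![0, ((a₁⁻¹ : (O ⧸ Ideal.span {π ^ ℓ'})ˣ) : O ⧸ Ideal.span {π ^ ℓ'}) * α₁;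
               ((a₁ : (O ⧸ Ideal.span {π ^ ℓ'})ˣ) : O ⧸ Ideal.span {π ^ ℓ'}), β₁] *
            ((g⁻¹ : Matrix.SpecialLinearGroup (Fin 2) (O ⧸ Ideal.span {π ^ ℓ'})) :
              Matrix (Fin 2) (Fin 2) (O ⧸ Ideal.span {π ^ ℓ'})) =
          !![0, ((a₂⁻¹ : (O ⧸ Ideal.span {π ^ ℓ'})ˣ) : O ⧸ Ideal.span {π ^ ℓ'}) * α₂;
             ((a₂ : (O ⧸ Ideal.span {π ^ ℓ'})ˣ) : O ⧸ Ideal.span {π ^ ℓ'}), β₂] +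
            s • (1 : Matrix (Fin 2) (Fin 2) (O ⧸ Ideal.span {π ^ ℓ'}))) ↔
      (∃ s : O ⧸ Ideal.span {π ^ ℓ'},
        β₂ = β₁ - 2 * s ∧
        α₂ = α₁ - s ^ 2 + s * β₁ ∧
        ∃ M : Matrix (Fin 2) (Fin 2) (O ⧸ Ideal.span {π ^ ℓ'}),
          M * !![0, ((a₁⁻¹ : (O ⧸ Ideal.span {π ^ ℓ'})ˣ) : O ⧸ Ideal.span {π ^ ℓ'}) * α₁;
                 ((a₁ : (O ⧸ Ideal.span {π ^ ℓ'})ˣ) : O ⧸ Ideal.span {π ^ ℓ'}), β₁] =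
            !![0, ((a₁⁻¹ : (O ⧸ Ideal.span {π ^ ℓ'})ˣ) : O ⧸ Ideal.span {π ^ ℓ'}) * α₁;
               ((a₁ : (O ⧸ Ideal.span {π ^ ℓ'})ˣ) : O ⧸ Ideal.span {π ^ ℓ'}), β₁] * M ∧
          IsUnit M.det ∧
          M.det = ((a₂ : (O ⧸ Ideal.span {π ^ ℓ'})ˣ) : O ⧸ Ideal.span {π ^ ℓ'}) *
            ((a₁⁻¹ : (O ⧸ Ideal.span {π ^ ℓ'})ˣ) : O ⧸ Ideal.span {π ^ ℓ'})) := by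
  constructor
  · rintro ⟨g, s, hg⟩
    obtain ⟨hβ, hα⟩ := scaledCompanion_relations_of_conj (Matrix.SpecialLinearGroup.toGL g) hg
    exact ⟨s, hβ, hα, (exists_conj_scaledCompanion_iff hβ hα).mp ⟨g, hg⟩⟩
  · rintro ⟨s, hβ, hα, hM⟩
    obtain ⟨g, hg⟩ := (exists_conj_scaledCompanion_iff hβ hα).mpr hM
    exact ⟨g, s, hg⟩

/-- for companion matrices `B₁, B₂` over `o_{ℓ'}` (residue characteristic 2),
`g B₁ g⁻¹ = B₂ + sI` for some `g ∈ SL₂(o_{ℓ'})` and scalar `s` iff there is `s` with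
`β₂ = β₁ − 2s`, `α₂ = α₁ − s² + sβ₁` and `a₂a₁⁻¹ ∈ det(C_{GL₂(o_{ℓ'})}(B₁))`. -/
theorem stmt_15 {O : Type*} [CommRing O] [IsDomain O] [IsDiscreteValuationRing O]
    (π : O) (hπ : Irreducible π)
    [IsAdicComplete (Ideal.span {π}) O] [Finite (O ⧸ Ideal.span {π})]
    (hres2 : π ∣ 2)
    (r : ℕ) (hr : 2 ≤ r) (ℓ' : ℕ) (hℓ' : ℓ' = r / 2)
    (a₁ a₂ : (O ⧸ Ideal.span {π ^ ℓ'})ˣ) (α₁ β₁ α₂ β₂ : O ⧸ Ideal.span {π ^ ℓ'}) :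
    (∃ (g : Matrix.SpecialLinearGroup (Fin 2) (O ⧸ Ideal.span {π ^ ℓ'}))
        (s : O ⧸ Ideal.span {π ^ ℓ'}),
        (g : Matrix (Fin 2) (Fin 2) (O ⧸ Ideal.span {π ^ ℓ'})) *
            !![0, ((a₁⁻¹ : (O ⧸ Ideal.span {π ^ ℓ'})ˣ) : O ⧸ Ideal.span {π ^ ℓ'}) * α₁;
               ((a₁ : (O ⧸ Ideal.span {π ^ ℓ'})ˣ) : O ⧸ Ideal.span {π ^ ℓ'}), β₁] *
            ((g⁻¹ : Matrix.SpecialLinearGroup (Fin 2) (O ⧸ Ideal.span {π ^ ℓ'})) :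
              Matrix (Fin 2) (Fin 2) (O ⧸ Ideal.span {π ^ ℓ'})) =
          !![0, ((a₂⁻¹ : (O ⧸ Ideal.span {π ^ ℓ'})ˣ) : O ⧸ Ideal.span {π ^ ℓ'}) * α₂;
             ((a₂ : (O ⧸ Ideal.span {π ^ ℓ'})ˣ) : O ⧸ Ideal.span {π ^ ℓ'}), β₂] +
            s • (1 : Matrix (Fin 2) (Fin 2) (O ⧸ Ideal.span {π ^ ℓ'}))) ↔
      (∃ s : O ⧸ Ideal.span {π ^ ℓ'},
        β₂ = β₁ - 2 * s ∧
        α₂ = α₁ - s ^ 2 + s * β₁ ∧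
        ∃ M : Matrix (Fin 2) (Fin 2) (O ⧸ Ideal.span {π ^ ℓ'}),
          M * !![0, ((a₁⁻¹ : (O ⧸ Ideal.span {π ^ ℓ'})ˣ) : O ⧸ Ideal.span {π ^ ℓ'}) * α₁;
                 ((a₁ : (O ⧸ Ideal.span {π ^ ℓ'})ˣ) : O ⧸ Ideal.span {π ^ ℓ'}), β₁] =
            !![0, ((a₁⁻¹ : (O ⧸ Ideal.span {π ^ ℓ'})ˣ) : O ⧸ Ideal.span {π ^ ℓ'}) * α₁;
               ((a₁ : (O ⧸ Ideal.span {π ^ ℓ'})ˣ) : O ⧸ Ideal.span {π ^ ℓ'}), β₁] * M ∧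
          IsUnit M.det ∧
          M.det = ((a₂ : (O ⧸ Ideal.span {π ^ ℓ'})ˣ) : O ⧸ Ideal.span {π ^ ℓ'}) *
            ((a₁⁻¹ : (O ⧸ Ideal.span {π ^ ℓ'})ˣ) : O ⧸ Ideal.span {π ^ ℓ'})) :=
  stmt_15_general π ℓ' a₁ a₂ α₁ β₁ α₂ β₂
end

section
/- Let o have characteristic 0, residue field of characteristic 2, and ramification index e, with r ≥ 4e, ℓ' = ⌊r/2⌋. For à ∈ M_2(o_r) a lift of the companion matrix with trace β̃, the set h_Ã^{ℓ'} = { x ∈ o_r : 2x ≡ 0 mod π^{ℓ'}, x(x+β̃) ≡ 0 mod π^{ℓ'} } equals the ideal (π^{ℓ'−m₀}) where m₀ = min{e, val(β̃)}; in particular |h_Ã^{ℓ'}| = q^{r−ℓ'+m₀}. -/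
/-! Since `2 = π^e·w`, the condition `2x ≡ 0 mod π^ℓ'` says `val x ≥ ℓ' - e`. If `val β̃ ≥ e`, this
already gives `x(x + β̃) ≡ 0` because `ℓ' ≥ 2e`. Otherwise `val x > val β̃`, so `x + β̃` has
valuation exactly `val β̃` and the second condition reads `val x ≥ ℓ' - val β̃`. For the count,
`(π^s) ⊆ o_r` is the kernel of `o_r → o_s`, hence has `q^r / q^s` elements. -/

section Divisibility

variable {O : Type*} [CommRing O] {π c : O}

theorem pow_dvd_mul_add_of_pow_sub_dvd {b : O} {m v ℓ : ℕ} (hmv : m ≤ v) (hmℓ : 2 * m ≤ ℓ)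
    (hb : π ^ v ∣ b) (hc : π ^ (ℓ - m) ∣ c) : π ^ ℓ ∣ c * (c + b) := by
  have hcb : π ^ m ∣ c + b :=
    dvd_add ((pow_dvd_pow π (by omega)).trans hc) ((pow_dvd_pow π hmv).trans hb)
  simpa [← pow_add, show ℓ - m + m = ℓ by omega] using mul_dvd_mul hc hcb

variable [IsDomain O]

theorem pow_dvd_two_mul_iff {e ℓ : ℕ} {w : Oˣ} (hπ : π ≠ 0) (hw : (2 : O) = π ^ e * w)
    (he : e ≤ ℓ) : π ^ ℓ ∣ 2 * c ↔ π ^ (ℓ - e) ∣ c := by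
  rw [hw, ← pow_mul_pow_sub π he, mul_assoc, mul_dvd_mul_iff_left (pow_ne_zero e hπ),
    Units.dvd_mul_left]

theorem pow_sub_dvd_of_pow_dvd_mul_add {u : O} {k v ℓ : ℕ} (hπ : Prime π) (hu : ¬π ∣ u)
    (hvk : v < k) (hc : π ^ k ∣ c) (h : π ^ ℓ ∣ c * (c + π ^ v * u)) : π ^ (ℓ - v) ∣ c := by
  obtain ⟨d, rfl⟩ := hc
  have hs : ¬π ∣ π ^ (k - v) * d + u := by
    rwa [dvd_add_right ((dvd_pow_self π (by omega : k - v ≠ 0)).mul_right d)]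
  refine hπ.pow_dvd_of_dvd_mul_right _ hs ?_
  rcases le_or_gt v ℓ with hvℓ | hℓv
  · rw [← pow_mul_pow_sub π hvℓ] at h
    refine (mul_dvd_mul_iff_left (pow_ne_zero v hπ.ne_zero)).mp ?_
    convert h using 1
    rw [← pow_mul_pow_sub π hvk.le]
    ring
  · simp [Nat.sub_eq_zero_of_le hℓv.le]

theorem pow_dvd_two_mul_and_pow_dvd_mul_add_iff {b : O} {e ℓ v : ℕ} {w : Oˣ} (hπ : Prime π)
    (hw : (2 : O) = π ^ e * w) (heℓ : 2 * e ≤ ℓ) (hb : π ^ v ∣ b)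
    (hb' : v < e → ¬π ^ (v + 1) ∣ b) :
    π ^ ℓ ∣ 2 * c ∧ π ^ ℓ ∣ c * (c + b) ↔ π ^ (ℓ - min e v) ∣ c := by
  rw [pow_dvd_two_mul_iff hπ.ne_zero hw (by omega)]
  rcases le_or_gt e v with hev | hve
  · rw [min_eq_left hev]
    exact ⟨And.left, fun hc ↦ ⟨hc, pow_dvd_mul_add_of_pow_sub_dvd hev heℓ hb hc⟩⟩
  · rw [min_eq_right hve.le]
    obtain ⟨u, rfl⟩ := hb
    have hu : ¬π ∣ u := fun ⟨t, ht⟩ ↦ hb' hve ⟨t, by rw [ht, pow_succ, mul_assoc]⟩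
    refine ⟨fun ⟨hc, h⟩ ↦ pow_sub_dvd_of_pow_dvd_mul_add hπ hu (by omega) hc h, fun hc ↦ ?_⟩
    exact ⟨(pow_dvd_pow π (by omega)).trans hc,
      pow_dvd_mul_add_of_pow_sub_dvd le_rfl (by omega) (dvd_mul_right _ _) hc⟩

end Divisibility

theorem Ideal.Quotient.mk_mem_span_pow_iff {R : Type*} [CommRing R] (π c : R) {a r : ℕ}
    (har : a ≤ r) :
    Ideal.Quotient.mk (Ideal.span {π ^ r}) c ∈
        Ideal.span {Ideal.Quotient.mk (Ideal.span {π ^ r}) π ^ a} ↔ π ^ a ∣ c := by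
  rw [← map_pow, ← Set.image_singleton (f := Ideal.Quotient.mk _), ← Ideal.map_span,
    Ideal.mem_quotient_iff_mem_sup,
    sup_eq_left.mpr (Ideal.span_singleton_le_span_singleton.mpr (pow_dvd_pow π har)),
    Ideal.mem_span_singleton]

theorem IsDiscreteValuationRing.natCard_quotient_span_pow {O : Type*} [CommRing O] [IsDomain O]
    [IsDiscreteValuationRing O] {π : O} (hπ : Irreducible π) (n : ℕ) :
    Nat.card (O ⧸ Ideal.span {π ^ n}) = Nat.card (O ⧸ Ideal.span {π}) ^ n := by
  have := (Ideal.span_singleton_prime hπ.ne_zero).mpr hπ.prime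
  rw [← Ideal.span_singleton_pow, ← Submodule.cardQuot_apply, cardQuot_pow_of_prime
    (by simpa using hπ.ne_zero), Submodule.cardQuot_apply]

theorem IsDiscreteValuationRing.natCard_span_pow_quotient {O : Type*} [CommRing O] [IsDomain O]
    [IsDiscreteValuationRing O] {π : O} (hπ : Irreducible π) [Finite (O ⧸ Ideal.span {π})]
    {s r : ℕ} (hsr : s ≤ r) :
    Nat.card (Ideal.span {Ideal.Quotient.mk (Ideal.span {π ^ r}) π ^ s}) =
      Nat.card (O ⧸ Ideal.span {π}) ^ (r - s) := by
  set J : Ideal O := Ideal.span {π ^ r}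
  have hJ : J ≤ Ideal.span {π ^ s} :=
    Ideal.span_singleton_le_span_singleton.mpr (pow_dvd_pow π hsr)
  have hspan : (Ideal.span {Ideal.Quotient.mk J π ^ s} : Set (O ⧸ J)) =
      Submodule.map J.mkQ (Ideal.span {π ^ s}) := by
    rw [← map_pow, ← Set.image_singleton (f := Ideal.Quotient.mk J), ← Ideal.map_span,
      Ideal.map_eq_submodule_map, Submodule.map_coe, Submodule.map_coe]
    rfl
  have hq : 0 < Nat.card (O ⧸ Ideal.span {π}) := Nat.card_pos
  have h := Submodule.card_quotient_mul_card_quotient _ _ hJ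
  rw [natCard_quotient_span_pow hπ, natCard_quotient_span_pow hπ, ← pow_sub_mul_pow _ hsr] at h
  exact (Nat.card_congr (Equiv.setCongr hspan)).trans
    (Nat.eq_of_mul_eq_mul_right (pow_pos hq s) h)

theorem stmt_17_general {O : Type*} [CommRing O] [IsDomain O] [IsDiscreteValuationRing O]
    (π : O) (hπ : Irreducible π)
    [Finite (O ⧸ Ideal.span {π})]
    (e : ℕ) (w : Oˣ) (hw : (2 : O) = π ^ e * (w : O))
    (r : ℕ) (hre : 4 * e ≤ r) (ℓ' : ℕ) (hℓ' : ℓ' = r / 2)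
    (b : O) (βt : O ⧸ Ideal.span {π ^ r})
    (hb : βt = Ideal.Quotient.mk (Ideal.span {π ^ r}) b)
    (v : ℕ) (hv1 : π ^ v ∣ b) (hv2 : v < r → ¬ π ^ (v + 1) ∣ b) :
    ({x : O ⧸ Ideal.span {π ^ r} |
        2 * x ∈ Ideal.span {(Ideal.Quotient.mk (Ideal.span {π ^ r}) π) ^ ℓ'} ∧
        x * (x + βt) ∈ Ideal.span {(Ideal.Quotient.mk (Ideal.span {π ^ r}) π) ^ ℓ'}} =
      ((Ideal.span {(Ideal.Quotient.mk (Ideal.span {π ^ r}) π) ^ (ℓ' - min e v)} :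
          Ideal (O ⧸ Ideal.span {π ^ r})) : Set (O ⧸ Ideal.span {π ^ r}))) ∧
    Nat.card {x : O ⧸ Ideal.span {π ^ r} |
        2 * x ∈ Ideal.span {(Ideal.Quotient.mk (Ideal.span {π ^ r}) π) ^ ℓ'} ∧
        x * (x + βt) ∈ Ideal.span {(Ideal.Quotient.mk (Ideal.span {π ^ r}) π) ^ ℓ'}} =
      (Nat.card (O ⧸ Ideal.span {π})) ^ (r - ℓ' + min e v) := by
  have hℓr : ℓ' ≤ r := by omega
  have hset : {x : O ⧸ Ideal.span {π ^ r} |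
        2 * x ∈ Ideal.span {(Ideal.Quotient.mk (Ideal.span {π ^ r}) π) ^ ℓ'} ∧
        x * (x + βt) ∈ Ideal.span {(Ideal.Quotient.mk (Ideal.span {π ^ r}) π) ^ ℓ'}} =
      ((Ideal.span {(Ideal.Quotient.mk (Ideal.span {π ^ r}) π) ^ (ℓ' - min e v)} :
          Ideal (O ⧸ Ideal.span {π ^ r})) : Set (O ⧸ Ideal.span {π ^ r})) := by
    ext x
    obtain ⟨c, rfl⟩ := Ideal.Quotient.mk_surjective x
    rw [Set.mem_ofPred_eq, SetLike.mem_coe, hb, ← map_ofNat (Ideal.Quotient.mk _) 2, ← map_add,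
      ← map_mul, ← map_mul, Ideal.Quotient.mk_mem_span_pow_iff π _ hℓr,
      Ideal.Quotient.mk_mem_span_pow_iff π _ hℓr,
      Ideal.Quotient.mk_mem_span_pow_iff π _ (by omega)]
    exact pow_dvd_two_mul_and_pow_dvd_mul_add_iff hπ.prime hw (by omega) hv1
      fun hve ↦ hv2 (by omega)
  refine ⟨hset, ?_⟩
  rw [hset, show r - ℓ' + min e v = r - (ℓ' - min e v) by omega]
  exact IsDiscreteValuationRing.natCard_span_pow_quotient hπ (by omega)

/-- for `O` of characteristic 0 with residue characteristic 2 and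
ramification index `e` (`2 = π^e·w`), `r ≥ 4e`, `ℓ' = ⌊r/2⌋`, the set
`h_Ã^{ℓ'} = { x ∈ o_r : 2x ≡ 0, x(x+β̃) ≡ 0 mod π^{ℓ'} }` equals the ideal
`(π^{ℓ'−m₀})` with `m₀ = min{e, val(β̃)}`, of cardinality `q^{r−ℓ'+m₀}`. -/
theorem stmt_17 {O : Type*} [CommRing O] [IsDomain O] [IsDiscreteValuationRing O] [CharZero O]
    (π : O) (hπ : Irreducible π)
    [IsAdicComplete (Ideal.span {π}) O] [Finite (O ⧸ Ideal.span {π})]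
    (e : ℕ) (he : 1 ≤ e) (w : Oˣ) (hw : (2 : O) = π ^ e * (w : O))
    (r : ℕ) (hre : 4 * e ≤ r) (ℓ' : ℕ) (hℓ' : ℓ' = r / 2)
    (b : O) (βt : O ⧸ Ideal.span {π ^ r})
    (hb : βt = Ideal.Quotient.mk (Ideal.span {π ^ r}) b)
    (v : ℕ) (hvr : v ≤ r) (hv1 : π ^ v ∣ b) (hv2 : v < r → ¬ π ^ (v + 1) ∣ b) :
    ({x : O ⧸ Ideal.span {π ^ r} |
        2 * x ∈ Ideal.span {(Ideal.Quotient.mk (Ideal.span {π ^ r}) π) ^ ℓ'} ∧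
        x * (x + βt) ∈ Ideal.span {(Ideal.Quotient.mk (Ideal.span {π ^ r}) π) ^ ℓ'}} =
      ((Ideal.span {(Ideal.Quotient.mk (Ideal.span {π ^ r}) π) ^ (ℓ' - min e v)} :
          Ideal (O ⧸ Ideal.span {π ^ r})) : Set (O ⧸ Ideal.span {π ^ r}))) ∧
    Nat.card {x : O ⧸ Ideal.span {π ^ r} |
        2 * x ∈ Ideal.span {(Ideal.Quotient.mk (Ideal.span {π ^ r}) π) ^ ℓ'} ∧
        x * (x + βt) ∈ Ideal.span {(Ideal.Quotient.mk (Ideal.span {π ^ r}) π) ^ ℓ'}} =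
      (Nat.card (O ⧸ Ideal.span {π})) ^ (r - ℓ' + min e v) :=
  stmt_17_general π hπ e w hw r hre ℓ' hℓ' b βt hb v hv1 hv2
end

section
/- Let A ∈ M_2(o_m) with cyclic reduction Ā mod π, over a complete DVR o with residue field F_q. Then |C_{GL_2(o_m)}(A)| = (q²−1)q^{2m−2} if Ā is irreducible over F_q, (q−1)²q^{2m−2} if Ā is split semisimple (two distinct eigenvalues in F_q), and (q²−q)q^{2m−2} if Ā is split non-semisimple (a single repeated eigenvalue but Ā not scalar). -/
/-!
A cyclic vector of `Ā` lifts to one of `A`, since a determinant that is a unit mod `π` is a unit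
of the local ring `o_m`. The centralizer of a matrix with cyclic vector `v` consists of the
matrices `x + yA`, with `(x, y)` unique, so it suffices to count the pairs with `det (x + yA)` a
unit. That condition only depends on `(x̄, ȳ)`, so each admissible pair mod `π` has
`q ^ (2m - 2)` lifts. Over `F_q`, `det (a + bĀ) = b² χ(-a/b)` for `b ≠ 0` and `det a = a²`, so
there are `(q - 1)(q + 1 - r)` admissible pairs, where `r` is the number of roots of `χ` in
`F_q`: `0`, `2` and `1` in the three cases.
-/

/-- A 2×2 matrix `A` over a commutative ring is *cyclic* if there is a vector `v`
such that `{v, A.mulVec v}` is a basis of the free module `R²`. -/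
def Mat2Cyclic {R : Type*} [CommRing R] (A : Matrix (Fin 2) (Fin 2) R) : Prop :=
  ∃ (v : Fin 2 → R) (b : Module.Basis (Fin 2) R (Fin 2 → R)), b 0 = v ∧ b 1 = A.mulVec v

open Function Matrix

theorem AddMonoidHom.card_preimage_of_surjective {G H : Type*} [AddGroup G] [AddGroup H]
    {g : G →+ H} (hg : Surjective g) (T : Set H) :
    Nat.card (g ⁻¹' T) = Nat.card g.ker * Nat.card T := by
  let e := QuotientAddGroup.quotientKerEquivOfSurjective g hg
  have hT : g ⁻¹' T = QuotientAddGroup.mk ⁻¹' (e ⁻¹' T) := rfl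
  rw [hT, Nat.card_congr (QuotientAddGroup.preimageMkEquivAddSubgroupProdSet _ _), Nat.card_prod,
    Nat.card_preimage_of_injective e.injective (by simp)]

namespace Ideal

theorem Quotient.isLocalHom_factor {R : Type*} [CommRing R] [IsLocalRing R]
    {I J : Ideal R} (hJ : J ≠ ⊤) (h : I ≤ J) : IsLocalHom (factor h) := by
  have : Nontrivial (R ⧸ J) := Quotient.nontrivial_iff.2 hJ
  have : Nontrivial (R ⧸ I) := Quotient.nontrivial_iff.2 (ne_top_of_le_ne_top hJ h)
  have : IsLocalRing (R ⧸ I) := .of_surjective' _ Quotient.mk_surjective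
  exact .of_surjective _ (Quotient.factor_surjective h)

variable {R : Type*} [CommRing R] [IsDomain R]

theorem card_quotient_span_mul {c : R} (hc : c ≠ 0) (d : R) :
    Nat.card (R ⧸ span {c * d}) = Nat.card (R ⧸ span {c}) * Nat.card (R ⧸ span {d}) := by
  -- multiplication by `c` maps `R` onto `(c)`, pulling `(c * d)` back to `(d)`
  let μ : R →+ (span {c}).toAddSubgroup := (AddMonoidHom.mulLeft c).codRestrict _
    fun x ↦ mem_span_singleton'.2 ⟨x, mul_comm x c⟩
  have hμ : Surjective μ := by
    rintro ⟨y, hy⟩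
    obtain ⟨x, rfl⟩ := mem_span_singleton.1 hy
    exact ⟨x, rfl⟩
  have hcomap : ((span {c * d}).toAddSubgroup.addSubgroupOf (span {c}).toAddSubgroup).comap μ =
      (span {d}).toAddSubgroup := by
    ext x
    simp [μ, AddSubgroup.mem_addSubgroupOf, mem_span_singleton, mul_dvd_mul_iff_left hc]
  have hle : span {c * d} ≤ span {c} := span_singleton_le_span_singleton.2 (dvd_mul_right c d)
  have key := AddSubgroup.relIndex_mul_index (H := (span {c * d}).toAddSubgroup)
    (K := (span {c}).toAddSubgroup) hle
  rw [AddSubgroup.relIndex, ← AddSubgroup.index_comap_of_surjective _ hμ, hcomap] at key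
  exact key.symm.trans (mul_comm _ _)

theorem card_quotient_span_pow {c : R} (hc : c ≠ 0) (j : ℕ) :
    Nat.card (R ⧸ span {c ^ j}) = Nat.card (R ⧸ span {c}) ^ j := by
  induction j with
  | zero => simp
  | succ j ih => rw [pow_succ', card_quotient_span_mul hc, ih, pow_succ']

theorem card_ker_factor_span_pow {π : R} (hπ : Irreducible π) [Finite (R ⧸ span {π})] {m : ℕ}
    (hle : span {π ^ m} ≤ span {π}) :
    Nat.card (RingHom.ker (Quotient.factor hle)) = Nat.card (R ⧸ span {π}) ^ (m - 1) := by
  have h := AddMonoidHom.card_preimage_of_surjective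
    (g := (Quotient.factor hle : R ⧸ span {π ^ m} →+ R ⧸ span {π})) (Quotient.factor_surjective hle)
    Set.univ
  rw [Set.preimage_univ, Nat.card_univ, Nat.card_univ, card_quotient_span_pow hπ.ne_zero] at h
  obtain _ | m := m
  · rw [pow_zero] at hle
    exact absurd (isUnit_of_dvd_one (span_singleton_le_span_singleton.1 hle)) hπ.not_isUnit
  · rw [pow_succ] at h
    exact (Nat.eq_of_mul_eq_mul_right Nat.card_pos h).symm

end Ideal

namespace Matrix

section SmulOneAddSmul

variable {R : Type*} [CommRing R] {n : Type*} [Fintype n] [DecidableEq n] (A : Matrix n n R)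

theorem commute_smul_one_add_smul (x y : R) : Commute (x • 1 + y • A) A :=
  ((Commute.one_left A).smul_left x).add_left ((Commute.refl A).smul_left y)

theorem smul_one_add_smul_mulVec (x y : R) (w : n → R) :
    (x • 1 + y • A) *ᵥ w = x • w + y • A *ᵥ w := by
  simp [add_mulVec, smul_mulVec]

end SmulOneAddSmul

variable {R : Type*} [CommRing R]

def IsCyclicVector (A : Matrix (Fin 2) (Fin 2) R) (v : Fin 2 → R) : Prop :=
  IsUnit (of ![v, A *ᵥ v]).det

theorem IsCyclicVector.of_map {S : Type*} [CommRing S] (f : R →+* S) [IsLocalHom f]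
    {A : Matrix (Fin 2) (Fin 2) R} {v : Fin 2 → R} (h : (A.map f).IsCyclicVector (f ∘ v)) :
    A.IsCyclicVector v := by
  refine IsUnit.of_map f _ ?_
  rw [RingHom.map_det]
  unfold IsCyclicVector at h
  convert h using 2
  ext i j
  fin_cases i <;> fin_cases j <;> simp

theorem vecMul_of_vec2 (u v w : Fin 2 → R) : u ᵥ* of ![v, w] = u 0 • v + u 1 • w := by
  rw [vecMul_eq_sum, Fin.sum_univ_two]
  rfl

variable {A : Matrix (Fin 2) (Fin 2) R} {v : Fin 2 → R}

theorem IsCyclicVector.ext (hv : A.IsCyclicVector v) {M N : Matrix (Fin 2) (Fin 2) R}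
    (h₀ : M *ᵥ v = N *ᵥ v) (h₁ : M *ᵥ (A *ᵥ v) = N *ᵥ (A *ᵥ v)) : M = N := by
  have hP : IsUnit (of ![v, A *ᵥ v])ᵀ := by
    rw [isUnit_transpose, isUnit_iff_isUnit_det]
    exact hv
  refine hP.mul_left_injective ?_
  ext i j
  fin_cases j
  · simpa [mul_apply, mulVec, dotProduct, mul_comm] using congrFun h₀ i
  · simpa [mul_apply, mulVec, dotProduct, mul_comm] using congrFun h₁ i

theorem IsCyclicVector.smul_one_add_smul_injective (hv : A.IsCyclicVector v) :
    Injective fun p : R × R ↦ p.1 • (1 : Matrix (Fin 2) (Fin 2) R) + p.2 • A := by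
  rintro ⟨x, y⟩ ⟨x', y'⟩ h
  have hvec := congrArg (· *ᵥ v) h
  simp only [smul_one_add_smul_mulVec] at hvec
  have := vecMul_injective_of_isUnit ((isUnit_iff_isUnit_det _).2 hv)
    (a₁ := ![x, y]) (a₂ := ![x', y']) (by simpa [vecMul_of_vec2] using hvec)
  simpa using this

theorem IsCyclicVector.exists_eq_smul_one_add_smul (hv : A.IsCyclicVector v)
    {M : Matrix (Fin 2) (Fin 2) R} (hM : M * A = A * M) :
    ∃ x y : R, x • 1 + y • A = M := by
  obtain ⟨u, hu⟩ := vecMul_surjective_iff_isUnit.2 ((isUnit_iff_isUnit_det _).2 hv) (M *ᵥ v)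
  simp only [vecMul_of_vec2] at hu
  refine ⟨u 0, u 1, hv.ext ?_ ?_⟩
  · rw [smul_one_add_smul_mulVec, hu]
  · calc (u 0 • 1 + u 1 • A) *ᵥ (A *ᵥ v) = A *ᵥ ((u 0 • 1 + u 1 • A) *ᵥ v) := by
          rw [mulVec_mulVec, (commute_smul_one_add_smul A _ _).eq, mulVec_mulVec]
      _ = M *ᵥ (A *ᵥ v) := by
          rw [smul_one_add_smul_mulVec, hu, mulVec_mulVec, ← hM, mulVec_mulVec]

theorem IsCyclicVector.card_centralizer_isUnit_det (hv : A.IsCyclicVector v) :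
    Nat.card {M : Matrix (Fin 2) (Fin 2) R | M * A = A * M ∧ IsUnit M.det} =
      Nat.card {p : R × R | IsUnit (p.1 • (1 : Matrix (Fin 2) (Fin 2) R) + p.2 • A).det} := by
  rw [← Nat.card_image_of_injective hv.smul_one_add_smul_injective]
  congr 2
  ext M
  constructor
  · rintro ⟨hM, hdet⟩
    obtain ⟨x, y, rfl⟩ := hv.exists_eq_smul_one_add_smul hM
    exact ⟨(x, y), hdet, rfl⟩
  · rintro ⟨⟨x, y⟩, hdet, rfl⟩
    exact ⟨(commute_smul_one_add_smul A x y).eq, hdet⟩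

end Matrix

theorem Mat2Cyclic.exists_isCyclicVector {R : Type*} [CommRing R] {A : Matrix (Fin 2) (Fin 2) R}
    (hA : Mat2Cyclic A) : ∃ v, A.IsCyclicVector v := by
  obtain ⟨v, b, hb0, hb1⟩ := hA
  refine ⟨v, ?_⟩
  have h := (Pi.basisFun R (Fin 2)).isUnit_det b
  rw [Module.Basis.det_apply, ← det_transpose] at h
  unfold IsCyclicVector
  convert h using 3
  ext i j
  fin_cases i <;> simp [Module.Basis.toMatrix_apply, hb0, hb1]

theorem card_isUnit_det_smul_one_add_smul {S K : Type*} [CommRing S] [Field K] {n : Type*}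
    [Fintype n] [DecidableEq n] (f : S →+* K) [IsLocalHom f] (hf : Surjective f)
    (A : Matrix n n S) :
    Nat.card {p : S × S | IsUnit (p.1 • (1 : Matrix n n S) + p.2 • A).det} =
      Nat.card (RingHom.ker f) ^ 2 *
        Nat.card {p : K × K | (p.1 • (1 : Matrix n n K) + p.2 • A.map f).det ≠ 0} := by
  let g : S × S →+ K × K := (f : S →+ K).prodMap (f : S →+ K)
  have hset : {p : S × S | IsUnit (p.1 • (1 : Matrix n n S) + p.2 • A).det} =
      g ⁻¹' {p : K × K | (p.1 • (1 : Matrix n n K) + p.2 • A.map f).det ≠ 0} := by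
    ext p
    simp only [Set.mem_ofPred_eq, Set.mem_preimage, ← isUnit_map_iff f, RingHom.map_det,
      isUnit_iff_ne_zero]
    congr!
    ext i j
    simp [g, one_apply, apply_ite f]
  have hg : Surjective g := Prod.map_surjective.2 ⟨hf, hf⟩
  rw [hset, AddMonoidHom.card_preimage_of_surjective hg, AddMonoidHom.ker_prodMap,
    Nat.card_congr (AddSubgroup.prodEquiv _ _).toEquiv, Nat.card_prod, sq]
  rfl

section FiniteField

open Polynomial Finset

variable {K : Type*} [Field K]

theorem Matrix.det_smul_one_add_smul {n : Type*} [Fintype n] [DecidableEq n] (M : Matrix n n K)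
    (a : K) {b : K} (hb : b ≠ 0) :
    (a • (1 : Matrix n n K) + b • M).det = (-b) ^ Fintype.card n * M.charpoly.eval (-a / b) := by
  rw [eval_charpoly, ← det_smul, scalar_apply, ← smul_one_eq_diagonal, smul_sub, smul_smul,
    neg_div, mul_neg, neg_mul, neg_neg, mul_div_cancel₀ a hb, neg_smul, sub_neg_eq_add]

variable [Fintype K] [DecidableEq K]

theorem Matrix.card_det_smul_one_add_smul_ne_zero {n : Type*} [Fintype n] [DecidableEq n]
    [Nonempty n] (M : Matrix n n K) :
    #{p : K × K | (p.1 • (1 : Matrix n n K) + p.2 • M).det ≠ 0} =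
      (Fintype.card K - 1) * (Fintype.card K + 1 - #{r | M.charpoly.IsRoot r}) := by
  set q := Fintype.card K
  set r := #{r | M.charpoly.IsRoot r}
  have hr : r ≤ q := card_le_univ _
  have hfiber (b : K) : #{a : K | (a • (1 : Matrix n n K) + b • M).det ≠ 0} =
      if b = 0 then q - 1 else q - r := by
    split_ifs with hb
    · simp [hb, filter_ne', card_erase_of_mem, q]
    · have hroots := card_filter_add_card_filter_not (s := univ) (M.charpoly.IsRoot ·)
      rw [card_univ] at hroots
      rw [← show #{r | ¬ M.charpoly.IsRoot r} = q - r by omega]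
      refine card_equiv ((Equiv.neg K).trans (Equiv.divRight₀ b hb)) fun a ↦ ?_
      simp [det_smul_one_add_smul M a hb, hb, neg_div]
  rw [card_filter, Fintype.sum_prod_type_right]
  simp_rw [← card_filter, hfiber]
  rw [sum_ite, sum_const, sum_const, filter_eq' univ 0, filter_ne' univ 0, if_pos (mem_univ _),
    card_singleton, card_erase_of_mem (mem_univ _), card_univ, smul_eq_mul, smul_eq_mul,
    show q + 1 - r = q - r + 1 by omega]
  ring

theorem Polynomial.filter_isRoot_X_sub_C_mul (a b : K) :
    ({r | ((X - C a) * (X - C b)).IsRoot r} : Finset K) = {a, b} := by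
  ext r
  simp [sub_eq_zero]

theorem Polynomial.card_filter_isRoot_of_irreducible {p : K[X]} (hp : Irreducible p)
    (hdeg : p.natDegree ≠ 1) : #{r | p.IsRoot r} = 0 :=
  card_eq_zero.2 (filter_eq_empty_iff.2 fun _ _ ↦ hp.not_isRoot_of_natDegree_ne_one hdeg)

end FiniteField

open Polynomial Finset in
theorem stmt_19_general {O : Type*} [CommRing O] [IsDomain O] [IsDiscreteValuationRing O]
    (π : O) (hπ : Irreducible π)
    [Finite (O ⧸ Ideal.span {π})]
    (m : ℕ)
    (hle : Ideal.span {π ^ m} ≤ Ideal.span {π})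
    (A : Matrix (Fin 2) (Fin 2) (O ⧸ Ideal.span {π ^ m}))
    (hcyc : Mat2Cyclic (A.map
      (⇑(Ideal.Quotient.factor hle)))) :
    (Irreducible (Matrix.charpoly (A.map
        (⇑(Ideal.Quotient.factor hle)))) →
      Nat.card {M : Matrix (Fin 2) (Fin 2) (O ⧸ Ideal.span {π ^ m}) |
          M * A = A * M ∧ IsUnit M.det} =
        (Nat.card (O ⧸ Ideal.span {π}) ^ 2 - 1) * Nat.card (O ⧸ Ideal.span {π}) ^ (2 * m - 2)) ∧
    ((∃ a b : O ⧸ Ideal.span {π}, a ≠ b ∧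
        Matrix.charpoly (A.map
          (⇑(Ideal.Quotient.factor hle))) =
          (X - C a) * (X - C b)) →
      Nat.card {M : Matrix (Fin 2) (Fin 2) (O ⧸ Ideal.span {π ^ m}) |
          M * A = A * M ∧ IsUnit M.det} =
        (Nat.card (O ⧸ Ideal.span {π}) - 1) ^ 2 * Nat.card (O ⧸ Ideal.span {π}) ^ (2 * m - 2)) ∧
    ((∃ a : O ⧸ Ideal.span {π},
        Matrix.charpoly (A.map
          (⇑(Ideal.Quotient.factor hle))) =
          (X - C a) ^ 2) →
      Nat.card {M : Matrix (Fin 2) (Fin 2) (O ⧸ Ideal.span {π ^ m}) |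
          M * A = A * M ∧ IsUnit M.det} =
        (Nat.card (O ⧸ Ideal.span {π}) ^ 2 - Nat.card (O ⧸ Ideal.span {π})) *
          Nat.card (O ⧸ Ideal.span {π}) ^ (2 * m - 2)) := by
  classical
  have hmax : (Ideal.span {π}).IsMaximal := PrincipalIdealRing.isMaximal_of_irreducible hπ
  let : Field (O ⧸ Ideal.span {π}) := Ideal.Quotient.field _
  let : Fintype (O ⧸ Ideal.span {π}) := Fintype.ofFinite _
  set f := Ideal.Quotient.factor hle
  have : IsLocalHom f := Ideal.Quotient.isLocalHom_factor hmax.ne_top hle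
  obtain ⟨v, hv⟩ := hcyc.exists_isCyclicVector
  obtain ⟨v, rfl⟩ := (Ideal.Quotient.factor_surjective hle).comp_left v
  set q := Nat.card (O ⧸ Ideal.span {π})
  obtain ⟨k, hk⟩ : ∃ k, q = k + 1 := Nat.exists_eq_add_one.2 Nat.card_pos
  have hcard : Nat.card {M : Matrix (Fin 2) (Fin 2) (O ⧸ Ideal.span {π ^ m}) |
      M * A = A * M ∧ IsUnit M.det} =
        (q - 1) * (q + 1 - #{r | (A.map f).charpoly.IsRoot r}) * q ^ (2 * m - 2) := by
    rw [(hv.of_map f).card_centralizer_isUnit_det,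
      card_isUnit_det_smul_one_add_smul f (Ideal.Quotient.factor_surjective hle),
      Ideal.card_ker_factor_span_pow hπ, Nat.card_eq_card_toFinset, Set.toFinset_ofPred,
      Matrix.card_det_smul_one_add_smul_ne_zero, ← Nat.card_eq_fintype_card, ← pow_mul,
      show (m - 1) * 2 = 2 * m - 2 by omega, mul_comm]
  refine ⟨fun hirr ↦ ?_, fun ⟨a, b, hab, hχ⟩ ↦ ?_, fun ⟨a, hχ⟩ ↦ ?_⟩ <;> rw [hcard] <;> congr 1
  · rw [card_filter_isRoot_of_irreducible hirr (by simp [Matrix.charpoly_natDegree_eq_dim]), hk,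
      Nat.add_sub_cancel, Nat.sub_zero]
    exact Nat.eq_sub_of_add_eq (by ring)
  · rw [hχ, filter_isRoot_X_sub_C_mul, card_pair hab, hk]
    simp [sq]
  · rw [hχ, sq, filter_isRoot_X_sub_C_mul, pair_eq_singleton, card_singleton, hk,
      Nat.add_sub_cancel, Nat.add_sub_cancel]
    exact Nat.eq_sub_of_add_eq (by ring)

open Polynomial in
/-- for `A ∈ M₂(o_m)` with cyclic reduction `Ā` mod `π`, the cardinality of
the centralizer of `A` in `GL₂(o_m)` is `(q²−1)q^{2m−2}`, `(q−1)²q^{2m−2}`, or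
`(q²−q)q^{2m−2}` according as `Ā` is irreducible, split semisimple, or split
non-semisimple. -/
theorem stmt_19 {O : Type*} [CommRing O] [IsDomain O] [IsDiscreteValuationRing O]
    (π : O) (hπ : Irreducible π)
    [Finite (O ⧸ Ideal.span {π})]
    (m : ℕ) (hm : 1 ≤ m)
    (hle : Ideal.span {π ^ m} ≤ Ideal.span {π})
    (A : Matrix (Fin 2) (Fin 2) (O ⧸ Ideal.span {π ^ m}))
    (hcyc : Mat2Cyclic (A.map
      (⇑(Ideal.Quotient.factor hle)))) :
    (Irreducible (Matrix.charpoly (A.map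
        (⇑(Ideal.Quotient.factor hle)))) →
      Nat.card {M : Matrix (Fin 2) (Fin 2) (O ⧸ Ideal.span {π ^ m}) |
          M * A = A * M ∧ IsUnit M.det} =
        (Nat.card (O ⧸ Ideal.span {π}) ^ 2 - 1) * Nat.card (O ⧸ Ideal.span {π}) ^ (2 * m - 2)) ∧
    ((∃ a b : O ⧸ Ideal.span {π}, a ≠ b ∧
        Matrix.charpoly (A.map
          (⇑(Ideal.Quotient.factor hle))) =
          (X - C a) * (X - C b)) →
      Nat.card {M : Matrix (Fin 2) (Fin 2) (O ⧸ Ideal.span {π ^ m}) |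
          M * A = A * M ∧ IsUnit M.det} =
        (Nat.card (O ⧸ Ideal.span {π}) - 1) ^ 2 * Nat.card (O ⧸ Ideal.span {π}) ^ (2 * m - 2)) ∧
    ((∃ a : O ⧸ Ideal.span {π},
        Matrix.charpoly (A.map
          (⇑(Ideal.Quotient.factor hle))) =
          (X - C a) ^ 2) →
      Nat.card {M : Matrix (Fin 2) (Fin 2) (O ⧸ Ideal.span {π ^ m}) |
          M * A = A * M ∧ IsUnit M.det} =
        (Nat.card (O ⧸ Ideal.span {π}) ^ 2 - Nat.card (O ⧸ Ideal.span {π})) *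
          Nat.card (O ⧸ Ideal.span {π}) ^ (2 * m - 2)) :=
  stmt_19_general π hπ m hle A hcyc
end
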